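/- arXiv:1306.2117 — 9 statements merged into one kernel-verified Lean document; each statement's English description precedes it below -/
import Mathlib

section
/- Let κ > 0 be a real constant and σ, v, α : ℝ² → ℝ smooth. Let L₁, L₊, L₋, L₂, B₁, B₊ : ℝ² → ℝ be smooth and let F, G : ℝ² → ℝ be smooth functions satisfying the eigenvector equations ∂_x F = L₁·F + L₊·G, ∂_x G = L₋·F + L₂·G, and ∂_t F = B₁·F + B₊·G on ℝ². If the two constraints κ·B₁ + σ·(∂_x L₁ + L₁² + L₊·L₋) + v·L₁ + α = 0 and κ·B₊ + σ·(∂_x L₊ + (L₁+L₂)·L₊) + v·L₊ = 0 hold on ℝ², then F satisfies the Fokker–Planck equation κ·∂_t F + σ·∂_x∂_x F + v·∂_x F + α·F = 0 on ℝ². -/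
open scoped BigOperators

/-- Partial derivative in the first ("time") variable. -/
noncomputable def pT (F : ℝ → ℝ → ℝ) : ℝ → ℝ → ℝ := fun t x => deriv (fun s => F s x) t

/-- Partial derivative in the second ("space") variable. -/
noncomputable def pX (F : ℝ → ℝ → ℝ) : ℝ → ℝ → ℝ := fun t x => deriv (fun y => F t y) x


lemma slice_diffX {H : ℝ → ℝ → ℝ} (h : ContDiff ℝ (⊤ : ℕ∞) (fun p : ℝ × ℝ => H p.1 p.2)) (t : ℝ) :
    Differentiable ℝ (fun y => H t y) :=
  (h.differentiable (by simp)).comp ((differentiable_const t).prodMk differentiable_id : Differentiable ℝ (fun y : ℝ => (t, y)))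

/-- if `(F,G)` is an eigenvector of the Lax pair and the two constraints
(2.8)–(2.9) hold, then `F` satisfies the Fokker–Planck equation
`κ ∂_t F + σ ∂_xx F + v ∂_x F + α F = 0`. -/
theorem fokker_planck_from_lax_constraints
    (κ : ℝ) (hκ : 0 < κ) (σ v α : ℝ → ℝ → ℝ)
    (hσ : ContDiff ℝ (⊤ : ℕ∞) (fun p : ℝ × ℝ => σ p.1 p.2))
    (hv : ContDiff ℝ (⊤ : ℕ∞) (fun p : ℝ × ℝ => v p.1 p.2))
    (hα : ContDiff ℝ (⊤ : ℕ∞) (fun p : ℝ × ℝ => α p.1 p.2))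
    (L₁ Lp Lm L₂ B₁ Bp : ℝ → ℝ → ℝ)
    (hL₁ : ContDiff ℝ (⊤ : ℕ∞) (fun p : ℝ × ℝ => L₁ p.1 p.2))
    (hLp : ContDiff ℝ (⊤ : ℕ∞) (fun p : ℝ × ℝ => Lp p.1 p.2))
    (hLm : ContDiff ℝ (⊤ : ℕ∞) (fun p : ℝ × ℝ => Lm p.1 p.2))
    (hL₂ : ContDiff ℝ (⊤ : ℕ∞) (fun p : ℝ × ℝ => L₂ p.1 p.2))
    (hB₁ : ContDiff ℝ (⊤ : ℕ∞) (fun p : ℝ × ℝ => B₁ p.1 p.2))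
    (hBp : ContDiff ℝ (⊤ : ℕ∞) (fun p : ℝ × ℝ => Bp p.1 p.2))
    (F G : ℝ → ℝ → ℝ)
    (hF : ContDiff ℝ (⊤ : ℕ∞) (fun p : ℝ × ℝ => F p.1 p.2))
    (hG : ContDiff ℝ (⊤ : ℕ∞) (fun p : ℝ × ℝ => G p.1 p.2))
    (heigFx : ∀ t x, pX F t x = L₁ t x * F t x + Lp t x * G t x)
    (heigGx : ∀ t x, pX G t x = Lm t x * F t x + L₂ t x * G t x)
    (heigFt : ∀ t x, pT F t x = B₁ t x * F t x + Bp t x * G t x)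
    (hcon1 : ∀ t x, κ * B₁ t x
        + σ t x * (pX L₁ t x + (L₁ t x) ^ 2 + Lp t x * Lm t x)
        + v t x * L₁ t x + α t x = 0)
    (hcon2 : ∀ t x, κ * Bp t x
        + σ t x * (pX Lp t x + (L₁ t x + L₂ t x) * Lp t x)
        + v t x * Lp t x = 0) :
    ∀ t x, κ * pT F t x + σ t x * pX (pX F) t x + v t x * pX F t x
        + α t x * F t x = 0 := by
  intro t x
  have dL₁ := slice_diffX hL₁ t
  have dLp := slice_diffX hLp t
  have dF := slice_diffX hF t
  have dG := slice_diffX hG t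
  have hxx : pX (pX F) t x
      = pX L₁ t x * F t x + L₁ t x * pX F t x
        + (pX Lp t x * G t x + Lp t x * pX G t x) := by
    have hfun : (fun y => pX F t y) = fun y => L₁ t y * F t y + Lp t y * G t y :=
      funext (heigFx t)
    show deriv (fun y => pX F t y) x = _
    rw [hfun, deriv_fun_add ((dL₁ x).fun_mul (dF x)) ((dLp x).fun_mul (dG x)),
      deriv_fun_mul (dL₁ x) (dF x), deriv_fun_mul (dLp x) (dG x)]
    rfl
  rw [hxx, heigFt, heigFx, heigGx]
  linear_combination F t x * hcon1 t x + G t x * hcon2 t x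
end

section
/- Let κ > 0 be a real constant and σ, v, α : ℝ² → ℝ smooth with σ nowhere zero. Let L₁, L₊, L₋, L₂, B₁, B₊, B₋, B₂ : ℝ² → ℝ be smooth with L₊ nowhere zero, satisfying on ℝ² the constraints κ·B₁ + σ·(∂_x L₁ + L₁² + L₊·L₋) + v·L₁ + α = 0 and κ·B₊ + σ·(∂_x L₊ + (L₁+L₂)·L₊) + v·L₊ = 0, and the zero-curvature equations ∂_t L₁ = ∂_x B₁ + B₊·L₋ − B₋·L₊, ∂_t L₊ = ∂_x B₊ + (B₁−B₂)·L₊ − B₊·(L₁−L₂), ∂_t L₋ = ∂_x B₋ + B₋·(L₁−L₂) − (B₁−B₂)·L₋, and ∂_t(L₁+L₂) = ∂_x(B₁+B₂). Set b₊ = B₊/L₊ and b₁ = b₊·L₁ − B₁. Then the first governing equation holds on ℝ²: κ·∂_t b₊ + σ·∂_x∂_x b₊ − ∂_x(b₊·(κ·b₊ + v)) + ((∂_xσ/σ)·b₊ − (∂_tσ/σ))·(κ·b₊ + v) + ∂_t v − 2·σ·∂_x b₁ = 0. -/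
open scoped BigOperators

section helpers
variable {F : ℝ → ℝ → ℝ}

lemma sliceX (hF : ContDiff ℝ (⊤ : ℕ∞) (fun p : ℝ × ℝ => F p.1 p.2)) (t : ℝ) :
    ContDiff ℝ (⊤ : ℕ∞) (fun y => F t y) :=
  hF.comp (contDiff_const.prodMk contDiff_id)

lemma sliceT (hF : ContDiff ℝ (⊤ : ℕ∞) (fun p : ℝ × ℝ => F p.1 p.2)) (x : ℝ) :
    ContDiff ℝ (⊤ : ℕ∞) (fun s => F s x) :=
  hF.comp (contDiff_id.prodMk contDiff_const)

lemma diffX (hF : ContDiff ℝ (⊤ : ℕ∞) (fun p : ℝ × ℝ => F p.1 p.2)) (t x : ℝ) :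
    DifferentiableAt ℝ (fun y => F t y) x :=
  ((sliceX hF t).differentiable (by simp)).differentiableAt

lemma diffT (hF : ContDiff ℝ (⊤ : ℕ∞) (fun p : ℝ × ℝ => F p.1 p.2)) (t x : ℝ) :
    DifferentiableAt ℝ (fun s => F s x) t :=
  ((sliceT hF x).differentiable (by simp)).differentiableAt

lemma hdX (hF : ContDiff ℝ (⊤ : ℕ∞) (fun p : ℝ × ℝ => F p.1 p.2)) (t x : ℝ) :
    HasDerivAt (fun y => F t y) (pX F t x) x :=
  (diffX hF t x).hasDerivAt

lemma hdT (hF : ContDiff ℝ (⊤ : ℕ∞) (fun p : ℝ × ℝ => F p.1 p.2)) (t x : ℝ) :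
    HasDerivAt (fun s => F s x) (pT F t x) t :=
  (diffT hF t x).hasDerivAt

lemma pX_eq_fderiv (hF : ContDiff ℝ (⊤ : ℕ∞) (fun p : ℝ × ℝ => F p.1 p.2)) (t x : ℝ) :
    pX F t x = fderiv ℝ (fun p : ℝ × ℝ => F p.1 p.2) (t, x) (0, 1) := by
  have h := ((hF.differentiable (by simp)) (t, x)).hasFDerivAt
  have hg : HasDerivAt (fun y : ℝ => ((t, y) : ℝ × ℝ)) ((0 : ℝ), (1 : ℝ)) x :=
    (hasDerivAt_const x t).prodMk (hasDerivAt_id x)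
  exact (h.comp_hasDerivAt x hg).deriv

lemma pT_eq_fderiv (hF : ContDiff ℝ (⊤ : ℕ∞) (fun p : ℝ × ℝ => F p.1 p.2)) (t x : ℝ) :
    pT F t x = fderiv ℝ (fun p : ℝ × ℝ => F p.1 p.2) (t, x) (1, 0) := by
  have h := ((hF.differentiable (by simp)) (t, x)).hasFDerivAt
  have hg : HasDerivAt (fun s : ℝ => ((s, x) : ℝ × ℝ)) ((1 : ℝ), (0 : ℝ)) t :=
    (hasDerivAt_id t).prodMk (hasDerivAt_const t x)
  exact (h.comp_hasDerivAt t hg).deriv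

lemma contDiff_fd (hF : ContDiff ℝ (⊤ : ℕ∞) (fun p : ℝ × ℝ => F p.1 p.2)) :
    ContDiff ℝ (⊤ : ℕ∞) (fderiv ℝ (fun p : ℝ × ℝ => F p.1 p.2)) :=
  hF.fderiv_right (le_of_eq (by simp))

lemma contDiff_pX (hF : ContDiff ℝ (⊤ : ℕ∞) (fun p : ℝ × ℝ => F p.1 p.2)) :
    ContDiff ℝ (⊤ : ℕ∞) (fun p : ℝ × ℝ => pX F p.1 p.2) := by
  have h1 : ContDiff ℝ (⊤ : ℕ∞) (fun p : ℝ × ℝ => fderiv ℝ (fun q : ℝ × ℝ => F q.1 q.2) p (0, 1)) :=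
    (contDiff_fd hF).clm_apply contDiff_const
  have h2 : (fun p : ℝ × ℝ => pX F p.1 p.2)
      = fun p : ℝ × ℝ => fderiv ℝ (fun q : ℝ × ℝ => F q.1 q.2) p (0, 1) :=
    funext fun p => pX_eq_fderiv hF p.1 p.2
  rw [h2]; exact h1

lemma contDiff_pT (hF : ContDiff ℝ (⊤ : ℕ∞) (fun p : ℝ × ℝ => F p.1 p.2)) :
    ContDiff ℝ (⊤ : ℕ∞) (fun p : ℝ × ℝ => pT F p.1 p.2) := by
  have h1 : ContDiff ℝ (⊤ : ℕ∞) (fun p : ℝ × ℝ => fderiv ℝ (fun q : ℝ × ℝ => F q.1 q.2) p (1, 0)) :=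
    (contDiff_fd hF).clm_apply contDiff_const
  have h2 : (fun p : ℝ × ℝ => pT F p.1 p.2)
      = fun p : ℝ × ℝ => fderiv ℝ (fun q : ℝ × ℝ => F q.1 q.2) p (1, 0) :=
    funext fun p => pT_eq_fderiv hF p.1 p.2
  rw [h2]; exact h1

lemma schwarz (hF : ContDiff ℝ (⊤ : ℕ∞) (fun p : ℝ × ℝ => F p.1 p.2)) (t x : ℝ) :
    pT (pX F) t x = pX (pT F) t x := by
  set f := fun p : ℝ × ℝ => F p.1 p.2 with hf
  have hdf : DifferentiableAt ℝ (fderiv ℝ f) (t, x) :=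
    ((contDiff_fd hF).differentiable (by simp)).differentiableAt
  have e1 : pT (pX F) t x = fderiv ℝ (fderiv ℝ f) (t, x) (1, 0) (0, 1) := by
    rw [pT_eq_fderiv (contDiff_pX hF) t x]
    have h2 : (fun p : ℝ × ℝ => pX F p.1 p.2)
        = fun p : ℝ × ℝ => fderiv ℝ f p (0, 1) :=
      funext fun p => pX_eq_fderiv hF p.1 p.2
    rw [h2, fderiv_clm_apply hdf (differentiableAt_const _)]
    simp
  have e2 : pX (pT F) t x = fderiv ℝ (fderiv ℝ f) (t, x) (0, 1) (1, 0) := by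
    rw [pX_eq_fderiv (contDiff_pT hF) t x]
    have h2 : (fun p : ℝ × ℝ => pT F p.1 p.2)
        = fun p : ℝ × ℝ => fderiv ℝ f p (1, 0) :=
      funext fun p => pT_eq_fderiv hF p.1 p.2
    rw [h2, fderiv_clm_apply hdf (differentiableAt_const _)]
    simp
  rw [e1, e2]
  exact (hF.contDiffAt.isSymmSndFDerivAt (by rw [minSmoothness_of_isRCLikeNormedField]; exact WithTop.coe_le_coe.mpr le_top)) _ _

end helpers

/-- the constraints (2.8)–(2.9) and the zero-curvature equations
(2.10)–(2.13) imply the first governing equation (2.21) for `b₊ = B₊/L₊` and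
`b₁ = b₊ L₁ - B₁`. -/
theorem first_governing_equation
    (κ : ℝ) (hκ : 0 < κ) (σ v α : ℝ → ℝ → ℝ)
    (hσ : ContDiff ℝ (⊤ : ℕ∞) (fun p : ℝ × ℝ => σ p.1 p.2))
    (hv : ContDiff ℝ (⊤ : ℕ∞) (fun p : ℝ × ℝ => v p.1 p.2))
    (hα : ContDiff ℝ (⊤ : ℕ∞) (fun p : ℝ × ℝ => α p.1 p.2))
    (hσ0 : ∀ t x, σ t x ≠ 0)
    (L₁ Lp Lm L₂ B₁ Bp Bm B₂ : ℝ → ℝ → ℝ)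
    (hL₁ : ContDiff ℝ (⊤ : ℕ∞) (fun p : ℝ × ℝ => L₁ p.1 p.2))
    (hLp : ContDiff ℝ (⊤ : ℕ∞) (fun p : ℝ × ℝ => Lp p.1 p.2))
    (hLm : ContDiff ℝ (⊤ : ℕ∞) (fun p : ℝ × ℝ => Lm p.1 p.2))
    (hL₂ : ContDiff ℝ (⊤ : ℕ∞) (fun p : ℝ × ℝ => L₂ p.1 p.2))
    (hB₁ : ContDiff ℝ (⊤ : ℕ∞) (fun p : ℝ × ℝ => B₁ p.1 p.2))
    (hBp : ContDiff ℝ (⊤ : ℕ∞) (fun p : ℝ × ℝ => Bp p.1 p.2))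
    (hBm : ContDiff ℝ (⊤ : ℕ∞) (fun p : ℝ × ℝ => Bm p.1 p.2))
    (hB₂ : ContDiff ℝ (⊤ : ℕ∞) (fun p : ℝ × ℝ => B₂ p.1 p.2))
    (hLp0 : ∀ t x, Lp t x ≠ 0)
    (hcon1 : ∀ t x, κ * B₁ t x
        + σ t x * (pX L₁ t x + (L₁ t x) ^ 2 + Lp t x * Lm t x)
        + v t x * L₁ t x + α t x = 0)
    (hcon2 : ∀ t x, κ * Bp t x
        + σ t x * (pX Lp t x + (L₁ t x + L₂ t x) * Lp t x)
        + v t x * Lp t x = 0)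
    (hzc1 : ∀ t x, pT L₁ t x = pX B₁ t x + Bp t x * Lm t x - Bm t x * Lp t x)
    (hzc2 : ∀ t x, pT Lp t x = pX Bp t x + (B₁ t x - B₂ t x) * Lp t x
        - Bp t x * (L₁ t x - L₂ t x))
    (hzc3 : ∀ t x, pT Lm t x = pX Bm t x + Bm t x * (L₁ t x - L₂ t x)
        - (B₁ t x - B₂ t x) * Lm t x)
    (hzc4 : ∀ t x, pT (fun t x => L₁ t x + L₂ t x) t x
        = pX (fun t x => B₁ t x + B₂ t x) t x)
    (bp b₁ : ℝ → ℝ → ℝ)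
    (hbp : ∀ t x, bp t x = Bp t x / Lp t x)
    (hb₁ : ∀ t x, b₁ t x = bp t x * L₁ t x - B₁ t x) :
    ∀ t x, κ * pT bp t x + σ t x * pX (pX bp) t x
        - pX (fun t x => bp t x * (κ * bp t x + v t x)) t x
        + ((pX σ t x / σ t x) * bp t x - pT σ t x / σ t x) * (κ * bp t x + v t x)
        + pT v t x - 2 * σ t x * pX b₁ t x = 0 := by
  intro t x
  have hbpE : bp = fun a b => Bp a b / Lp a b := funext fun a => funext fun b => hbp a b
  have hb1E : b₁ = fun a b => bp a b * L₁ a b - B₁ a b := funext fun a => funext fun b => hb₁ a b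
  -- derivative of bp in x (as a HasDerivAt)
  have hdbpX : HasDerivAt (fun y => bp t y) (pX bp t x) x := by
    have hD : DifferentiableAt ℝ (fun y => bp t y) x := by
      rw [hbpE]; exact (diffX hBp t x).div (diffX hLp t x) (hLp0 t x)
    exact hD.hasDerivAt
  -- product rule for pX (bp * (κ bp + v))
  have hP : pX (fun t x => bp t x * (κ * bp t x + v t x)) t x
      = pX bp t x * (κ * bp t x + v t x)
        + bp t x * (κ * pX bp t x + pX v t x) :=
    (hdbpX.mul ((hdbpX.const_mul κ).add (hdX hv t x))).deriv
  -- derivative of b₁ in x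
  have hb1X : pX b₁ t x = pX bp t x * L₁ t x + bp t x * pX L₁ t x - pX B₁ t x := by
    rw [hb1E]
    exact ((hdbpX.mul (hdX hL₁ t x)).sub (hdX hB₁ t x)).deriv
  -- quotient rule for pX bp (at every point)
  have hDbpX : ∀ y, pX bp t y
      = (pX Bp t y * Lp t y - Bp t y * pX Lp t y) / Lp t y ^ 2 := by
    intro y; rw [hbpE]
    exact ((hdX hBp t y).div (hdX hLp t y) (hLp0 t y)).deriv
  -- quotient rule for pT bp
  have hDbpT : pT bp t x
      = (pT Bp t x * Lp t x - Bp t x * pT Lp t x) / Lp t x ^ 2 := by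
    rw [hbpE]
    exact ((hdT hBp t x).div (hdT hLp t x) (hLp0 t x)).deriv
  -- second x-derivative of bp
  have hfun2 : (fun y => pX bp t y)
      = fun y => (pX Bp t y * Lp t y - Bp t y * pX Lp t y) / Lp t y ^ 2 :=
    funext hDbpX
  have hnum : HasDerivAt (fun y => pX Bp t y * Lp t y - Bp t y * pX Lp t y)
      (pX (pX Bp) t x * Lp t x + pX Bp t x * pX Lp t x
        - (pX Bp t x * pX Lp t x + Bp t x * pX (pX Lp) t x)) x :=
    ((hdX (contDiff_pX hBp) t x).mul (hdX hLp t x)).sub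
      ((hdX hBp t x).mul (hdX (contDiff_pX hLp) t x))
  have hden : HasDerivAt (fun y => Lp t y ^ 2)
      (2 * Lp t x ^ 1 * pX Lp t x) x := by
    have := (hdX hLp t x).fun_pow 2
    norm_num at this ⊢
    convert this using 1
  have hq := hnum.div hden (pow_ne_zero 2 (hLp0 t x))
  have hDbpXX : pX (pX bp) t x
      = ((pX (pX Bp) t x * Lp t x + pX Bp t x * pX Lp t x
          - (pX Bp t x * pX Lp t x + Bp t x * pX (pX Lp) t x)) * Lp t x ^ 2
        - (pX Bp t x * Lp t x - Bp t x * pX Lp t x) * (2 * Lp t x ^ 1 * pX Lp t x))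
        / (Lp t x ^ 2) ^ 2 := by
    show deriv (fun y => pX bp t y) x = _
    rw [hfun2]
    exact hq.deriv
  -- t-derivative of the constraint (2.9)
  have E2 : κ * pT Bp t x
      + (pT σ t x * (pX Lp t x + (L₁ t x + L₂ t x) * Lp t x)
        + σ t x * (pT (pX Lp) t x
          + ((pT L₁ t x + pT L₂ t x) * Lp t x + (L₁ t x + L₂ t x) * pT Lp t x)))
      + (pT v t x * Lp t x + v t x * pT Lp t x) = 0 := by
    have H : HasDerivAt
        (fun s => κ * Bp s x + σ s x * (pX Lp s x + (L₁ s x + L₂ s x) * Lp s x)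
          + v s x * Lp s x)
        (κ * pT Bp t x
          + (pT σ t x * (pX Lp t x + (L₁ t x + L₂ t x) * Lp t x)
            + σ t x * (pT (pX Lp) t x
              + ((pT L₁ t x + pT L₂ t x) * Lp t x + (L₁ t x + L₂ t x) * pT Lp t x)))
          + (pT v t x * Lp t x + v t x * pT Lp t x)) t :=
      (((hdT hBp t x).const_mul κ).add ((hdT hσ t x).mul
        ((hdT (contDiff_pX hLp) t x).add
          (((hdT hL₁ t x).add (hdT hL₂ t x)).mul (hdT hLp t x))))).add
        ((hdT hv t x).mul (hdT hLp t x))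
    have H0 : HasDerivAt
        (fun s => κ * Bp s x + σ s x * (pX Lp s x + (L₁ s x + L₂ s x) * Lp s x)
          + v s x * Lp s x) 0 t := by
      have he : (fun s => κ * Bp s x + σ s x * (pX Lp s x + (L₁ s x + L₂ s x) * Lp s x)
          + v s x * Lp s x) = fun _ => (0 : ℝ) := funext fun s => hcon2 s x
      rw [he]; exact hasDerivAt_const t 0
    exact H.unique H0
  -- x-derivative of the constraint (2.9)
  have E3 : κ * pX Bp t x
      + (pX σ t x * (pX Lp t x + (L₁ t x + L₂ t x) * Lp t x)
        + σ t x * (pX (pX Lp) t x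
          + ((pX L₁ t x + pX L₂ t x) * Lp t x + (L₁ t x + L₂ t x) * pX Lp t x)))
      + (pX v t x * Lp t x + v t x * pX Lp t x) = 0 := by
    have H : HasDerivAt
        (fun y => κ * Bp t y + σ t y * (pX Lp t y + (L₁ t y + L₂ t y) * Lp t y)
          + v t y * Lp t y)
        (κ * pX Bp t x
          + (pX σ t x * (pX Lp t x + (L₁ t x + L₂ t x) * Lp t x)
            + σ t x * (pX (pX Lp) t x
              + ((pX L₁ t x + pX L₂ t x) * Lp t x + (L₁ t x + L₂ t x) * pX Lp t x)))
          + (pX v t x * Lp t x + v t x * pX Lp t x)) x :=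
      (((hdX hBp t x).const_mul κ).add ((hdX hσ t x).mul
        ((hdX (contDiff_pX hLp) t x).add
          (((hdX hL₁ t x).add (hdX hL₂ t x)).mul (hdX hLp t x))))).add
        ((hdX hv t x).mul (hdX hLp t x))
    have H0 : HasDerivAt
        (fun y => κ * Bp t y + σ t y * (pX Lp t y + (L₁ t y + L₂ t y) * Lp t y)
          + v t y * Lp t y) 0 x := by
      have he : (fun y => κ * Bp t y + σ t y * (pX Lp t y + (L₁ t y + L₂ t y) * Lp t y)
          + v t y * Lp t y) = fun _ => (0 : ℝ) := funext fun y => hcon2 t y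
      rw [he]; exact hasDerivAt_const x 0
    exact H.unique H0
  -- x-derivative of the zero-curvature equation (2.11), plus Schwarz
  have A : HasDerivAt (fun y => pT Lp t y) (pX (pT Lp) t x) x :=
    hdX (contDiff_pT hLp) t x
  have B : HasDerivAt
      (fun y => pX Bp t y + (B₁ t y - B₂ t y) * Lp t y - Bp t y * (L₁ t y - L₂ t y))
      (pX (pX Bp) t x
        + ((pX B₁ t x - pX B₂ t x) * Lp t x + (B₁ t x - B₂ t x) * pX Lp t x)
        - (pX Bp t x * (L₁ t x - L₂ t x) + Bp t x * (pX L₁ t x - pX L₂ t x))) x :=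
    ((hdX (contDiff_pX hBp) t x).add
      (((hdX hB₁ t x).sub (hdX hB₂ t x)).mul (hdX hLp t x))).sub
      ((hdX hBp t x).mul ((hdX hL₁ t x).sub (hdX hL₂ t x)))
  have hS : (fun y => pT Lp t y)
      = fun y => pX Bp t y + (B₁ t y - B₂ t y) * Lp t y - Bp t y * (L₁ t y - L₂ t y) :=
    funext fun y => hzc2 t y
  rw [hS] at A
  have hm : pT (pX Lp) t x
      = pX (pX Bp) t x
        + ((pX B₁ t x - pX B₂ t x) * Lp t x + (B₁ t x - B₂ t x) * pX Lp t x)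
        - (pX Bp t x * (L₁ t x - L₂ t x) + Bp t x * (pX L₁ t x - pX L₂ t x)) :=
    (schwarz hLp t x).trans (A.unique B)
  -- the trace zero-curvature equation (2.13)
  have e1 : pT (fun a b => L₁ a b + L₂ a b) t x = pT L₁ t x + pT L₂ t x :=
    ((hdT hL₁ t x).add (hdT hL₂ t x)).deriv
  have e2 : pX (fun a b => B₁ a b + B₂ a b) t x = pX B₁ t x + pX B₂ t x :=
    ((hdX hB₁ t x).add (hdX hB₂ t x)).deriv
  have ha2t : pT L₂ t x = pX B₁ t x + pX B₂ t x - pT L₁ t x := by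
    have h4 := hzc4 t x
    rw [e1, e2] at h4
    linarith
  -- solved forms
  have hwt : pT v t x
      = (-(κ * pT Bp t x) - pT σ t x * (pX Lp t x + (L₁ t x + L₂ t x) * Lp t x)
        - σ t x * (pT (pX Lp) t x
          + ((pT L₁ t x + pT L₂ t x) * Lp t x + (L₁ t x + L₂ t x) * pT Lp t x))
        - v t x * pT Lp t x) / Lp t x := by
    rw [eq_div_iff (hLp0 t x)]; linear_combination E2
  have hwx : pX v t x
      = (-(κ * pX Bp t x) - pX σ t x * (pX Lp t x + (L₁ t x + L₂ t x) * Lp t x)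
        - σ t x * (pX (pX Lp) t x
          + ((pX L₁ t x + pX L₂ t x) * Lp t x + (L₁ t x + L₂ t x) * pX Lp t x))
        - v t x * pX Lp t x) / Lp t x := by
    rw [eq_div_iff (hLp0 t x)]; linear_combination E3
  have hw : v t x
      = (-(κ * Bp t x) - σ t x * (pX Lp t x + (L₁ t x + L₂ t x) * Lp t x)) / Lp t x := by
    rw [eq_div_iff (hLp0 t x)]; linear_combination hcon2 t x
  rw [hP, hb1X, hDbpXX, hDbpT, hDbpX x, hbp t x, hwt, hwx, hm, hzc2 t x, ha2t, hw]
  have h1 : Lp t x ≠ 0 := hLp0 t x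
  have h2 : σ t x ≠ 0 := hσ0 t x
  field_simp
  ring
end

section
/- Let κ > 0 be a real constant and σ, v, α : ℝ² → ℝ smooth with σ nowhere zero. Let L₁, L₊, L₋, L₂, B₁, B₊, B₋, B₂ : ℝ² → ℝ be smooth with L₊ nowhere zero, satisfying on ℝ² the constraints κ·B₁ + σ·(∂_x L₁ + L₁² + L₊·L₋) + v·L₁ + α = 0 and κ·B₊ + σ·(∂_x L₊ + (L₁+L₂)·L₊) + v·L₊ = 0, and the zero-curvature equations ∂_t L₁ = ∂_x B₁ + B₊·L₋ − B₋·L₊, ∂_t L₊ = ∂_x B₊ + (B₁−B₂)·L₊ − B₊·(L₁−L₂), ∂_t L₋ = ∂_x B₋ + B₋·(L₁−L₂) − (B₁−B₂)·L₋, and ∂_t(L₁+L₂) = ∂_x(B₁+B₂). Set b₊ = B₊/L₊ and b₁ = b₊·L₁ − B₁. Then the second governing equation holds on ℝ²: κ·∂_t b₁ + σ·∂_x∂_x b₁ + v·∂_x b₁ = (2·∂_x b₊ + (∂_tσ/σ) − (∂_xσ/σ)·b₊)·(κ·b₁ − α) + ∂_t α − b₊·∂_x α. -/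
open scoped BigOperators

lemma pX_eq (F : ℝ → ℝ → ℝ) (hF : ContDiff ℝ (⊤ : ℕ∞) (fun p : ℝ × ℝ => F p.1 p.2)) (t x : ℝ) :
    pX F t x = fderiv ℝ (fun p : ℝ × ℝ => F p.1 p.2) (t, x) (0, 1) := by
  have h1 : HasFDerivAt (fun p : ℝ × ℝ => F p.1 p.2)
      (fderiv ℝ (fun p : ℝ × ℝ => F p.1 p.2) (t, x)) (t, x) :=
    (hF.differentiable (by simp) (t, x)).hasFDerivAt
  have h2 : HasDerivAt (fun y : ℝ => ((t, y) : ℝ × ℝ)) (0, 1) x :=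
    HasDerivAt.prodMk (hasDerivAt_const x t) (hasDerivAt_id x)
  exact (h1.comp_hasDerivAt x h2).deriv

lemma pT_eq (F : ℝ → ℝ → ℝ) (hF : ContDiff ℝ (⊤ : ℕ∞) (fun p : ℝ × ℝ => F p.1 p.2)) (t x : ℝ) :
    pT F t x = fderiv ℝ (fun p : ℝ × ℝ => F p.1 p.2) (t, x) (1, 0) := by
  have h1 : HasFDerivAt (fun p : ℝ × ℝ => F p.1 p.2)
      (fderiv ℝ (fun p : ℝ × ℝ => F p.1 p.2) (t, x)) (t, x) :=
    (hF.differentiable (by simp) (t, x)).hasFDerivAt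
  have h2 : HasDerivAt (fun s : ℝ => ((s, x) : ℝ × ℝ)) (1, 0) t :=
    HasDerivAt.prodMk (hasDerivAt_id t) (hasDerivAt_const t x)
  exact (h1.comp_hasDerivAt t h2).deriv

lemma pX_hasDerivAt (F : ℝ → ℝ → ℝ) (hF : ContDiff ℝ (⊤ : ℕ∞) (fun p : ℝ × ℝ => F p.1 p.2)) (t x : ℝ) :
    HasDerivAt (fun y => F t y) (pX F t x) x := by
  have h1 : HasFDerivAt (fun p : ℝ × ℝ => F p.1 p.2)
      (fderiv ℝ (fun p : ℝ × ℝ => F p.1 p.2) (t, x)) (t, x) :=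
    (hF.differentiable (by simp) (t, x)).hasFDerivAt
  have h2 : HasDerivAt (fun y : ℝ => ((t, y) : ℝ × ℝ)) (0, 1) x :=
    HasDerivAt.prodMk (hasDerivAt_const x t) (hasDerivAt_id x)
  have h3 := h1.comp_hasDerivAt x h2
  rw [pX_eq F hF t x]
  exact h3

lemma pT_hasDerivAt (F : ℝ → ℝ → ℝ) (hF : ContDiff ℝ (⊤ : ℕ∞) (fun p : ℝ × ℝ => F p.1 p.2)) (t x : ℝ) :
    HasDerivAt (fun s => F s x) (pT F t x) t := by
  have h1 : HasFDerivAt (fun p : ℝ × ℝ => F p.1 p.2)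
      (fderiv ℝ (fun p : ℝ × ℝ => F p.1 p.2) (t, x)) (t, x) :=
    (hF.differentiable (by simp) (t, x)).hasFDerivAt
  have h2 : HasDerivAt (fun s : ℝ => ((s, x) : ℝ × ℝ)) (1, 0) t :=
    HasDerivAt.prodMk (hasDerivAt_id t) (hasDerivAt_const t x)
  have h3 := h1.comp_hasDerivAt t h2
  rw [pT_eq F hF t x]
  exact h3

lemma pX_contDiff (F : ℝ → ℝ → ℝ) (hF : ContDiff ℝ (⊤ : ℕ∞) (fun p : ℝ × ℝ => F p.1 p.2)) :
    ContDiff ℝ (⊤ : ℕ∞) (fun p : ℝ × ℝ => pX F p.1 p.2) := by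
  have h : (fun p : ℝ × ℝ => pX F p.1 p.2)
      = fun p : ℝ × ℝ => fderiv ℝ (fun p : ℝ × ℝ => F p.1 p.2) p (0, 1) := by
    funext p
    exact pX_eq F hF p.1 p.2
  rw [h]
  exact (hF.fderiv_right (by simp)).clm_apply contDiff_const

lemma pT_pX_comm (F : ℝ → ℝ → ℝ) (hF : ContDiff ℝ (⊤ : ℕ∞) (fun p : ℝ × ℝ => F p.1 p.2)) (t x : ℝ) :
    pT (pX F) t x = pX (pT F) t x := by
  have hg : ContDiff ℝ (⊤ : ℕ∞) (fderiv ℝ (fun p : ℝ × ℝ => F p.1 p.2)) := hF.fderiv_right (by simp)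
  have hgd := (hg.differentiable (by simp) (t, x)).hasFDerivAt
  have e1 : pT (pX F) t x
      = fderiv ℝ (fderiv ℝ (fun p : ℝ × ℝ => F p.1 p.2)) (t, x) (1, 0) (0, 1) := by
    have h2 : HasDerivAt (fun s : ℝ => ((s, x) : ℝ × ℝ)) (1, 0) t :=
      HasDerivAt.prodMk (hasDerivAt_id t) (hasDerivAt_const t x)
    have h3 := hgd.comp_hasDerivAt t h2
    have h4 := h3.clm_apply (u := fun _ => ((0 : ℝ), (1 : ℝ))) (u' := 0)
      (hasDerivAt_const t ((0 : ℝ), (1 : ℝ)))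
    have h6 : (fun s => pX F s x)
        = fun s => fderiv ℝ (fun p : ℝ × ℝ => F p.1 p.2) (s, x) (0, 1) :=
      funext fun s => pX_eq F hF s x
    show deriv (fun s => pX F s x) t = _
    rw [h6]
    simpa using h4.deriv
  have e2 : pX (pT F) t x
      = fderiv ℝ (fderiv ℝ (fun p : ℝ × ℝ => F p.1 p.2)) (t, x) (0, 1) (1, 0) := by
    have h2 : HasDerivAt (fun y : ℝ => ((t, y) : ℝ × ℝ)) (0, 1) x :=
      HasDerivAt.prodMk (hasDerivAt_const x t) (hasDerivAt_id x)
    have h3 := hgd.comp_hasDerivAt x h2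
    have h4 := h3.clm_apply (u := fun _ => ((1 : ℝ), (0 : ℝ))) (u' := 0)
      (hasDerivAt_const x ((1 : ℝ), (0 : ℝ)))
    have h6 : (fun y => pT F t y)
        = fun y => fderiv ℝ (fun p : ℝ × ℝ => F p.1 p.2) (t, y) (1, 0) :=
      funext fun y => pT_eq F hF t y
    show deriv (fun y => pT F t y) x = _
    rw [h6]
    simpa using h4.deriv
  rw [e1, e2]
  exact (hF.contDiffAt.isSymmSndFDerivAt (by rw [minSmoothness_of_isRCLikeNormedField]; exact WithTop.coe_le_coe.mpr le_top)) (1, 0) (0, 1)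

lemma deriv_zero_of_eq_zero {f : ℝ → ℝ} {d x : ℝ} (h : HasDerivAt f d x)
    (h0 : ∀ y, f y = 0) : d = 0 := by
  have hf : f = fun _ => (0 : ℝ) := funext h0
  rw [hf] at h
  exact h.unique (hasDerivAt_const x 0)

set_option maxHeartbeats 4000000 in
lemma key_alg {k sg vv al L1 LP LM L2 B1 BP BM B2
    Xsg Xv Xal XL1 XLP XLM XL2 XB1 XBP XBM XB2 XXB1 XXBP XXL1 XXLP
    Tsg Tv Tal TL1 TLP TLM TB1 TBP TXL1 TXLP
    Tb1 Xb1 XXb1 Xbp bpv b1v : ℝ}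
    (hk : k ≠ 0) (hsg : sg ≠ 0) (hLP : LP ≠ 0)
    (eB1 : B1 = (-(sg * (XL1 + L1 ^ 2 + LP * LM)) - vv * L1 - al) / k)
    (eBP : BP = (-(sg * (XLP + (L1 + L2) * LP)) - vv * LP) / k)
    (eXXL1 : XXL1 = (-(k * XB1) - Xsg * (XL1 + L1 ^ 2 + LP * LM)
        - sg * (2 * L1 * XL1 + XLP * LM + LP * XLM) - Xv * L1 - vv * XL1 - Xal) / sg)
    (eXXLP : XXLP = (-(k * XBP) - Xsg * (XLP + (L1 + L2) * LP)
        - sg * ((XL1 + XL2) * LP + (L1 + L2) * XLP) - Xv * LP - vv * XLP) / sg)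
    (eTL1 : TL1 = XB1 + BP * LM - BM * LP)
    (eTLP : TLP = XBP + (B1 - B2) * LP - BP * (L1 - L2))
    (eTLM : TLM = XBM + BM * (L1 - L2) - (B1 - B2) * LM)
    (eTXL1 : TXL1 = XXB1 + (XBP * LM + BP * XLM) - (XBM * LP + BM * XLP))
    (eTXLP : TXLP = XXBP + ((XB1 - XB2) * LP + (B1 - B2) * XLP)
        - (XBP * (L1 - L2) + BP * (XL1 - XL2)))
    (eTB1 : TB1 = (-(Tsg * (XL1 + L1 ^ 2 + LP * LM))
        - sg * (TXL1 + 2 * L1 * TL1 + TLP * LM + LP * TLM)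
        - Tv * L1 - vv * TL1 - Tal) / k)
    (eTBP : TBP = (-(Tsg * (XLP + (L1 + L2) * LP))
        - sg * (TXLP + (XB1 + XB2) * LP + (L1 + L2) * TLP)
        - Tv * LP - vv * TLP) / k)
    (eTb1 : Tb1 = (TBP * LP - BP * TLP) / LP ^ 2 * L1 + BP / LP * TL1 - TB1)
    (eXb1 : Xb1 = (XBP * LP - BP * XLP) / LP ^ 2 * L1 + BP / LP * XL1 - XB1)
    (eXbp : Xbp = (XBP * LP - BP * XLP) / LP ^ 2)
    (eXXb1 : XXb1 = (XXBP * L1 + 2 * XBP * XL1 + BP * XXL1) / LP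
        - (2 * XBP * L1 * XLP + 2 * BP * XL1 * XLP + BP * L1 * XXLP) / LP ^ 2
        + 2 * BP * L1 * XLP ^ 2 / LP ^ 3 - XXB1)
    (ebp : bpv = BP / LP)
    (eb1 : b1v = bpv * L1 - B1) :
    k * Tb1 + sg * XXb1 + vv * Xb1
      = (2 * Xbp + Tsg / sg - Xsg / sg * bpv) * (k * b1v - al) + Tal - bpv * Xal := by
  subst eTb1 eXb1 eXXb1 eXbp eb1 ebp eTB1 eTBP eTXL1 eTXLP eTL1 eTLP eTLM eXXL1 eXXLP eB1 eBP
  field_simp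
  ring

set_option maxHeartbeats 2000000 in
/-- the constraints (2.8)–(2.9) and the zero-curvature equations
(2.10)–(2.13) imply the second governing equation (2.23) for `b₊ = B₊/L₊` and
`b₁ = b₊ L₁ - B₁`. -/
theorem second_governing_equation
    (κ : ℝ) (hκ : 0 < κ) (σ v α : ℝ → ℝ → ℝ)
    (hσ : ContDiff ℝ (⊤ : ℕ∞) (fun p : ℝ × ℝ => σ p.1 p.2))
    (hv : ContDiff ℝ (⊤ : ℕ∞) (fun p : ℝ × ℝ => v p.1 p.2))
    (hα : ContDiff ℝ (⊤ : ℕ∞) (fun p : ℝ × ℝ => α p.1 p.2))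
    (hσ0 : ∀ t x, σ t x ≠ 0)
    (L₁ Lp Lm L₂ B₁ Bp Bm B₂ : ℝ → ℝ → ℝ)
    (hL₁ : ContDiff ℝ (⊤ : ℕ∞) (fun p : ℝ × ℝ => L₁ p.1 p.2))
    (hLp : ContDiff ℝ (⊤ : ℕ∞) (fun p : ℝ × ℝ => Lp p.1 p.2))
    (hLm : ContDiff ℝ (⊤ : ℕ∞) (fun p : ℝ × ℝ => Lm p.1 p.2))
    (hL₂ : ContDiff ℝ (⊤ : ℕ∞) (fun p : ℝ × ℝ => L₂ p.1 p.2))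
    (hB₁ : ContDiff ℝ (⊤ : ℕ∞) (fun p : ℝ × ℝ => B₁ p.1 p.2))
    (hBp : ContDiff ℝ (⊤ : ℕ∞) (fun p : ℝ × ℝ => Bp p.1 p.2))
    (hBm : ContDiff ℝ (⊤ : ℕ∞) (fun p : ℝ × ℝ => Bm p.1 p.2))
    (hB₂ : ContDiff ℝ (⊤ : ℕ∞) (fun p : ℝ × ℝ => B₂ p.1 p.2))
    (hLp0 : ∀ t x, Lp t x ≠ 0)
    (hcon1 : ∀ t x, κ * B₁ t x
        + σ t x * (pX L₁ t x + (L₁ t x) ^ 2 + Lp t x * Lm t x)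
        + v t x * L₁ t x + α t x = 0)
    (hcon2 : ∀ t x, κ * Bp t x
        + σ t x * (pX Lp t x + (L₁ t x + L₂ t x) * Lp t x)
        + v t x * Lp t x = 0)
    (hzc1 : ∀ t x, pT L₁ t x = pX B₁ t x + Bp t x * Lm t x - Bm t x * Lp t x)
    (hzc2 : ∀ t x, pT Lp t x = pX Bp t x + (B₁ t x - B₂ t x) * Lp t x
        - Bp t x * (L₁ t x - L₂ t x))
    (hzc3 : ∀ t x, pT Lm t x = pX Bm t x + Bm t x * (L₁ t x - L₂ t x)
        - (B₁ t x - B₂ t x) * Lm t x)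
    (hzc4 : ∀ t x, pT (fun t x => L₁ t x + L₂ t x) t x
        = pX (fun t x => B₁ t x + B₂ t x) t x)
    (bp b₁ : ℝ → ℝ → ℝ)
    (hbp : ∀ t x, bp t x = Bp t x / Lp t x)
    (hb₁ : ∀ t x, b₁ t x = bp t x * L₁ t x - B₁ t x) :
    ∀ t x, κ * pT b₁ t x + σ t x * pX (pX b₁) t x + v t x * pX b₁ t x
        = (2 * pX bp t x + pT σ t x / σ t x - (pX σ t x / σ t x) * bp t x)
            * (κ * b₁ t x - α t x)
          + pT α t x - bp t x * pX α t x := by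
  intro t x
  have hκ0 : (κ : ℝ) ≠ 0 := ne_of_gt hκ
  have hL1X := pX_contDiff L₁ hL₁
  have hLpX := pX_contDiff Lp hLp
  have hB1X := pX_contDiff B₁ hB₁
  have hBpX := pX_contDiff Bp hBp
  have hbpf : bp = fun a b => Bp a b / Lp a b := funext fun a => funext fun b => hbp a b
  have hb1f : b₁ = fun a b => Bp a b / Lp a b * L₁ a b - B₁ a b :=
    funext fun a => funext fun b => by rw [hb₁ a b, hbp a b]
  -- mixed partials via Clairaut and zero curvature
  have hmix1 : pT (pX L₁) t x
      = pX (pX B₁) t x + (pX Bp t x * Lm t x + Bp t x * pX Lm t x)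
        - (pX Bm t x * Lp t x + Bm t x * pX Lp t x) := by
    rw [pT_pX_comm L₁ hL₁ t x]
    have hf : pT L₁ = fun a b => pX B₁ a b + Bp a b * Lm a b - Bm a b * Lp a b :=
      funext fun a => funext fun b => hzc1 a b
    rw [hf]
    exact (((pX_hasDerivAt (pX B₁) hB1X t x).add
      ((pX_hasDerivAt Bp hBp t x).mul (pX_hasDerivAt Lm hLm t x))).sub
      ((pX_hasDerivAt Bm hBm t x).mul (pX_hasDerivAt Lp hLp t x))).deriv
  have hmix2 : pT (pX Lp) t x
      = pX (pX Bp) t x + ((pX B₁ t x - pX B₂ t x) * Lp t x + (B₁ t x - B₂ t x) * pX Lp t x)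
        - (pX Bp t x * (L₁ t x - L₂ t x) + Bp t x * (pX L₁ t x - pX L₂ t x)) := by
    rw [pT_pX_comm Lp hLp t x]
    have hf : pT Lp = fun a b => pX Bp a b + (B₁ a b - B₂ a b) * Lp a b
        - Bp a b * (L₁ a b - L₂ a b) := funext fun a => funext fun b => hzc2 a b
    rw [hf]
    exact (((pX_hasDerivAt (pX Bp) hBpX t x).add
      (((pX_hasDerivAt B₁ hB₁ t x).sub (pX_hasDerivAt B₂ hB₂ t x)).mul
        (pX_hasDerivAt Lp hLp t x))).sub
      ((pX_hasDerivAt Bp hBp t x).mul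
        ((pX_hasDerivAt L₁ hL₁ t x).sub (pX_hasDerivAt L₂ hL₂ t x)))).deriv
  have e4' : pT L₁ t x + pT L₂ t x = pX B₁ t x + pX B₂ t x := by
    have h1 : pT (fun a b => L₁ a b + L₂ a b) t x = pT L₁ t x + pT L₂ t x :=
      ((pT_hasDerivAt L₁ hL₁ t x).add (pT_hasDerivAt L₂ hL₂ t x)).deriv
    have h2 : pX (fun a b => B₁ a b + B₂ a b) t x = pX B₁ t x + pX B₂ t x :=
      ((pX_hasDerivAt B₁ hB₁ t x).add (pX_hasDerivAt B₂ hB₂ t x)).deriv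
    rw [← h1, ← h2]
    exact hzc4 t x
  -- t-derivatives of the constraints
  have hTB1 : pT B₁ t x = (-(pT σ t x * (pX L₁ t x + L₁ t x ^ 2 + Lp t x * Lm t x))
      - σ t x * (pT (pX L₁) t x + 2 * L₁ t x * pT L₁ t x + pT Lp t x * Lm t x
          + Lp t x * pT Lm t x)
      - pT v t x * L₁ t x - v t x * pT L₁ t x - pT α t x) / κ := by
    have h := deriv_zero_of_eq_zero
      (((pT_hasDerivAt B₁ hB₁ t x).const_mul κ).add
        (((pT_hasDerivAt σ hσ t x).mul ((pT_hasDerivAt (pX L₁) hL1X t x).add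
          (((pT_hasDerivAt L₁ hL₁ t x).mul (pT_hasDerivAt L₁ hL₁ t x)).add
            ((pT_hasDerivAt Lp hLp t x).mul (pT_hasDerivAt Lm hLm t x))))).add
          (((pT_hasDerivAt v hv t x).mul (pT_hasDerivAt L₁ hL₁ t x)).add
            (pT_hasDerivAt α hα t x))))
      (fun s => by simp only [Pi.add_apply, Pi.mul_apply]; linear_combination hcon1 s x)
    rw [eq_div_iff hκ0]
    simp only [Pi.add_apply, Pi.mul_apply] at h
    linear_combination h
  have hTBp : pT Bp t x = (-(pT σ t x * (pX Lp t x + (L₁ t x + L₂ t x) * Lp t x))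
      - σ t x * (pT (pX Lp) t x + (pX B₁ t x + pX B₂ t x) * Lp t x
          + (L₁ t x + L₂ t x) * pT Lp t x)
      - pT v t x * Lp t x - v t x * pT Lp t x) / κ := by
    have h := deriv_zero_of_eq_zero
      (((pT_hasDerivAt Bp hBp t x).const_mul κ).add
        (((pT_hasDerivAt σ hσ t x).mul ((pT_hasDerivAt (pX Lp) hLpX t x).add
          (((pT_hasDerivAt L₁ hL₁ t x).add (pT_hasDerivAt L₂ hL₂ t x)).mul
            (pT_hasDerivAt Lp hLp t x)))).add
          ((pT_hasDerivAt v hv t x).mul (pT_hasDerivAt Lp hLp t x))))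
      (fun s => by simp only [Pi.add_apply, Pi.mul_apply]; linear_combination hcon2 s x)
    rw [e4'] at h
    rw [eq_div_iff hκ0]
    simp only [Pi.add_apply, Pi.mul_apply] at h
    linear_combination h
  -- x-derivatives of the constraints
  have hXXL1 : pX (pX L₁) t x = (-(κ * pX B₁ t x)
      - pX σ t x * (pX L₁ t x + L₁ t x ^ 2 + Lp t x * Lm t x)
      - σ t x * (2 * L₁ t x * pX L₁ t x + pX Lp t x * Lm t x + Lp t x * pX Lm t x)
      - pX v t x * L₁ t x - v t x * pX L₁ t x - pX α t x) / σ t x := by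
    have h := deriv_zero_of_eq_zero
      (((pX_hasDerivAt B₁ hB₁ t x).const_mul κ).add
        (((pX_hasDerivAt σ hσ t x).mul ((pX_hasDerivAt (pX L₁) hL1X t x).add
          (((pX_hasDerivAt L₁ hL₁ t x).mul (pX_hasDerivAt L₁ hL₁ t x)).add
            ((pX_hasDerivAt Lp hLp t x).mul (pX_hasDerivAt Lm hLm t x))))).add
          (((pX_hasDerivAt v hv t x).mul (pX_hasDerivAt L₁ hL₁ t x)).add
            (pX_hasDerivAt α hα t x))))
      (fun y => by simp only [Pi.add_apply, Pi.mul_apply]; linear_combination hcon1 t y)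
    rw [eq_div_iff (hσ0 t x)]
    simp only [Pi.add_apply, Pi.mul_apply] at h
    linear_combination h
  have hXXLp : pX (pX Lp) t x = (-(κ * pX Bp t x)
      - pX σ t x * (pX Lp t x + (L₁ t x + L₂ t x) * Lp t x)
      - σ t x * ((pX L₁ t x + pX L₂ t x) * Lp t x + (L₁ t x + L₂ t x) * pX Lp t x)
      - pX v t x * Lp t x - v t x * pX Lp t x) / σ t x := by
    have h := deriv_zero_of_eq_zero
      (((pX_hasDerivAt Bp hBp t x).const_mul κ).add
        (((pX_hasDerivAt σ hσ t x).mul ((pX_hasDerivAt (pX Lp) hLpX t x).add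
          (((pX_hasDerivAt L₁ hL₁ t x).add (pX_hasDerivAt L₂ hL₂ t x)).mul
            (pX_hasDerivAt Lp hLp t x)))).add
          ((pX_hasDerivAt v hv t x).mul (pX_hasDerivAt Lp hLp t x))))
      (fun y => by simp only [Pi.add_apply, Pi.mul_apply]; linear_combination hcon2 t y)
    rw [eq_div_iff (hσ0 t x)]
    simp only [Pi.add_apply, Pi.mul_apply] at h
    linear_combination h
  -- the constraints themselves, solved for B₁ and Bp
  have hB1v : B₁ t x = (-(σ t x * (pX L₁ t x + L₁ t x ^ 2 + Lp t x * Lm t x))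
      - v t x * L₁ t x - α t x) / κ := by
    rw [eq_div_iff hκ0]; linear_combination hcon1 t x
  have hBpv : Bp t x = (-(σ t x * (pX Lp t x + (L₁ t x + L₂ t x) * Lp t x))
      - v t x * Lp t x) / κ := by
    rw [eq_div_iff hκ0]; linear_combination hcon2 t x
  -- derivatives of b₁ and bp
  have hTb1 : pT b₁ t x = (pT Bp t x * Lp t x - Bp t x * pT Lp t x) / Lp t x ^ 2 * L₁ t x
      + Bp t x / Lp t x * pT L₁ t x - pT B₁ t x := by
    rw [hb1f]
    exact ((((pT_hasDerivAt Bp hBp t x).div (pT_hasDerivAt Lp hLp t x) (hLp0 t x)).mul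
      (pT_hasDerivAt L₁ hL₁ t x)).sub (pT_hasDerivAt B₁ hB₁ t x)).deriv
  have hXb1 : pX b₁ t x = (pX Bp t x * Lp t x - Bp t x * pX Lp t x) / Lp t x ^ 2 * L₁ t x
      + Bp t x / Lp t x * pX L₁ t x - pX B₁ t x := by
    rw [hb1f]
    exact ((((pX_hasDerivAt Bp hBp t x).div (pX_hasDerivAt Lp hLp t x) (hLp0 t x)).mul
      (pX_hasDerivAt L₁ hL₁ t x)).sub (pX_hasDerivAt B₁ hB₁ t x)).deriv
  have hXbp : pX bp t x = (pX Bp t x * Lp t x - Bp t x * pX Lp t x) / Lp t x ^ 2 := by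
    rw [hbpf]
    exact ((pX_hasDerivAt Bp hBp t x).div (pX_hasDerivAt Lp hLp t x) (hLp0 t x)).deriv
  have hpXb1fun : pX (fun a b => Bp a b / Lp a b * L₁ a b - B₁ a b)
      = fun a b => (pX Bp a b * Lp a b - Bp a b * pX Lp a b) / Lp a b ^ 2 * L₁ a b
          + Bp a b / Lp a b * pX L₁ a b - pX B₁ a b := by
    funext a b
    exact ((((pX_hasDerivAt Bp hBp a b).div (pX_hasDerivAt Lp hLp a b) (hLp0 a b)).mul
      (pX_hasDerivAt L₁ hL₁ a b)).sub (pX_hasDerivAt B₁ hB₁ a b)).deriv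
  have hXXb1 : pX (pX b₁) t x
      = (pX (pX Bp) t x * L₁ t x + 2 * pX Bp t x * pX L₁ t x + Bp t x * pX (pX L₁) t x)
          / Lp t x
        - (2 * pX Bp t x * L₁ t x * pX Lp t x + 2 * Bp t x * pX L₁ t x * pX Lp t x
            + Bp t x * L₁ t x * pX (pX Lp) t x) / Lp t x ^ 2
        + 2 * Bp t x * L₁ t x * pX Lp t x ^ 2 / Lp t x ^ 3
        - pX (pX B₁) t x := by
    rw [hb1f, hpXb1fun]
    have h := ((((((pX_hasDerivAt (pX Bp) hBpX t x).mul (pX_hasDerivAt Lp hLp t x)).sub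
        ((pX_hasDerivAt Bp hBp t x).mul (pX_hasDerivAt (pX Lp) hLpX t x))).div
        ((pX_hasDerivAt Lp hLp t x).pow 2) (pow_ne_zero 2 (hLp0 t x))).mul
        (pX_hasDerivAt L₁ hL₁ t x)).add
        (((pX_hasDerivAt Bp hBp t x).div (pX_hasDerivAt Lp hLp t x) (hLp0 t x)).mul
          (pX_hasDerivAt (pX L₁) hL1X t x))).sub (pX_hasDerivAt (pX B₁) hB1X t x)
    refine h.deriv.trans ?_
    simp only [Pi.add_apply, Pi.mul_apply, Pi.sub_apply, Pi.div_apply, Pi.pow_apply]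
    field_simp [hLp0 t x]
    ring
  exact key_alg hκ0 (hσ0 t x) (hLp0 t x) hB1v hBpv hXXL1 hXXLp (hzc1 t x) (hzc2 t x)
    (hzc3 t x) hmix1 hmix2 hTB1 hTBp hTb1 hXb1 hXbp hXXb1 (hbp t x) (hb₁ t x)
end

section
/- Let κ > 0 be real, N ≥ 1 an integer, and Q₁, …, Q_N : ℝ → ℝ twice continuously differentiable with Q_j(t) ≠ Q_k(t) for all j ≠ k and all t; let J₀ : ℝ → ℝ be continuously differentiable. Set v(t,x) = t − x², R_k(t) = Σ_{j≠k} 1/(Q_k(t) − Q_j(t)), A_k(t) = κ·Q_k'(t) + t − Q_k(t)² − 2·R_k(t), and on Ω = {(t,x) : x ≠ Q_k(t) for all k} define b₊(t,x) = −(1/κ)·Σ_{k=1}^N 1/(x − Q_k(t)) and 2·b₁(t,x) = (1/κ)·Σ_{k=1}^N A_k(t)/(x − Q_k(t)) − (2/κ)·Σ_{k=1}^N Q_k(t) − J₀(t) + (1/N − 1/κ)·Σ_{k=1}^N (x − Q_k(t)). Then, for any such Q_k and J₀, the first governing equation of quantum Painlevé II holds identically on Ω: ∂_t(κ·b₊ +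 v) + ∂_x(∂_x b₊ − b₊·(κ·b₊ + v) − 2·b₁) = 0. -/
open scoped BigOperators

/-! Away from the poles every term is a rational function of `x` with poles at the `Q k t`,
so both partial derivatives can be computed termwise. After substituting `A k`, everything cancels
except for the `R k` terms, which are handled by the partial-fraction identity
`∑ k R k / (x - Q k)² = (∑ k 1 / (x - Q k)) (∑ k 1 / (x - Q k)²) - ∑ k 1 / (x - Q k)³`:
the cross terms `1 / ((Q k - Q j) (x - Q k) (x - Q j))` are antisymmetric in `(k, j)`. -/

open Finset

section PartialFractions

variable {ι 𝕜 : Type*} [Fintype ι] [DecidableEq ι] [Field 𝕜] [CharZero 𝕜]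

theorem Finset.sum_sum_erase_eq_zero_of_antisymm {f : ι → ι → 𝕜}
    (hf : ∀ k j, f j k = -f k j) : ∑ k, ∑ j ∈ univ.erase k, f k j = 0 := by
  have hswap : ∑ k, ∑ j ∈ univ.erase k, f k j = ∑ j, ∑ k ∈ univ.erase j, f k j :=
    sum_comm' fun k j => by simp [ne_comm]
  have hneg : ∑ j, ∑ k ∈ univ.erase j, f k j = -∑ k, ∑ j ∈ univ.erase k, f k j := by
    simp only [← sum_neg_distrib]
    exact sum_congr rfl fun j _ => sum_congr rfl fun k _ => hf j k
  exact self_eq_neg.mp (hswap.trans hneg)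

theorem sum_sum_erase_one_div_sub_div_sq {q : ι → 𝕜} (hq : Function.Injective q) {x : 𝕜}
    (hx : ∀ k, x ≠ q k) :
    ∑ k, (∑ j ∈ univ.erase k, 1 / (q k - q j)) / (x - q k) ^ 2
      = (∑ k, 1 / (x - q k)) * ∑ k, 1 / (x - q k) ^ 2 - ∑ k, 1 / (x - q k) ^ 3 := by
  have hx' : ∀ k, x - q k ≠ 0 := fun k => sub_ne_zero.mpr (hx k)
  have hsplit : ∀ k, ∀ j ∈ univ.erase k, 1 / (q k - q j) / (x - q k) ^ 2
      = 1 / (x - q k) ^ 2 * (1 / (x - q j)) + 1 / ((q k - q j) * (x - q k) * (x - q j)) := by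
    intro k j hj
    have hkj : q k - q j ≠ 0 := sub_ne_zero.mpr (hq.ne (ne_of_mem_erase hj).symm)
    field_simp [hx' k, hx' j]
    ring
  have hanti : ∑ k, ∑ j ∈ univ.erase k, 1 / ((q k - q j) * (x - q k) * (x - q j)) = 0 :=
    sum_sum_erase_eq_zero_of_antisymm fun k j => by
      rw [← neg_sub (q k), neg_mul, neg_mul, div_neg, mul_right_comm]
  calc ∑ k, (∑ j ∈ univ.erase k, 1 / (q k - q j)) / (x - q k) ^ 2
      = ∑ k, ∑ j ∈ univ.erase k, 1 / (x - q k) ^ 2 * (1 / (x - q j)) := by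
        rw [← add_zero (∑ k, ∑ j ∈ univ.erase k, _), ← hanti, ← sum_add_distrib]
        simp_rw [sum_div, ← sum_add_distrib]
        exact sum_congr rfl fun k _ => sum_congr rfl (hsplit k)
    _ = ∑ k, 1 / (x - q k) ^ 2 * (∑ j, 1 / (x - q j) - 1 / (x - q k)) := by
        simp_rw [← mul_sum, sum_erase_eq_sub (mem_univ _)]
    _ = _ := by
        simp_rw [mul_sub, sum_sub_distrib, ← sum_mul, mul_comm]
        congr 1
        exact sum_congr rfl fun k _ => by field_simp [hx' k]

theorem sum_ansatz_coeff_div_sub_sq {q : ι → 𝕜} (hq : Function.Injective q) {x : 𝕜}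
    (hx : ∀ k, x ≠ q k) (κ t : 𝕜) (q' : ι → 𝕜) :
    ∑ k, (κ * q' k + t - q k ^ 2 - 2 * ∑ j ∈ univ.erase k, 1 / (q k - q j)) / (x - q k) ^ 2
      = κ * ∑ k, q' k / (x - q k) ^ 2 + (t - x ^ 2) * ∑ k, 1 / (x - q k) ^ 2
        + 2 * x * ∑ k, 1 / (x - q k) - Fintype.card ι
        - 2 * ((∑ k, 1 / (x - q k)) * ∑ k, 1 / (x - q k) ^ 2 - ∑ k, 1 / (x - q k) ^ 3) := by
  have hsplit k : (κ * q' k + t - q k ^ 2 - 2 * ∑ j ∈ univ.erase k, 1 / (q k - q j))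
        / (x - q k) ^ 2
      = κ * (q' k / (x - q k) ^ 2) + (t - x ^ 2) * (1 / (x - q k) ^ 2)
        + 2 * x * (1 / (x - q k)) - 1
        - 2 * ((∑ j ∈ univ.erase k, 1 / (q k - q j)) / (x - q k) ^ 2) := by
    have hk : x - q k ≠ 0 := sub_ne_zero.mpr (hx k)
    field_simp
    ring
  simp only [hsplit, sum_add_distrib, sum_sub_distrib, ← mul_sum, sum_const, card_univ,
    nsmul_one, sum_sum_erase_one_div_sub_div_sq hq hx]

end PartialFractions

section PoleSums

variable {ι 𝕜 : Type*} [Fintype ι] [NontriviallyNormedField 𝕜]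

theorem hasDerivAt_sum_div_sub_pow (c q : ι → 𝕜) (n : ℕ) {x : 𝕜}
    (hx : ∀ k, x ≠ q k) :
    HasDerivAt (fun y => ∑ k, c k / (y - q k) ^ n)
      (-n * ∑ k, c k / (x - q k) ^ (n + 1)) x := by
  rw [mul_sum]
  refine HasDerivAt.fun_sum fun k _ => ?_
  have hk : x - q k ≠ 0 := sub_ne_zero.mpr (hx k)
  have h := ((((hasDerivAt_id x).sub_const (q k)).fun_pow n).fun_inv
    (pow_ne_zero n hk)).const_mul (c k)
  simp only [← div_eq_mul_inv, id_eq] at h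
  refine h.congr_deriv ?_
  cases n with
  | zero => simp
  | succ m =>
    field_simp
    push_cast
    ring

theorem hasDerivAt_sum_one_div_sub_apply {q : ι → 𝕜 → 𝕜} {q' : ι → 𝕜} {t x : 𝕜}
    (hq : ∀ k, HasDerivAt (q k) (q' k) t) (hx : ∀ k, x ≠ q k t) :
    HasDerivAt (fun s => ∑ k, 1 / (x - q k s)) (∑ k, q' k / (x - q k t) ^ 2) t := by
  refine HasDerivAt.fun_sum fun k _ => ?_
  have h := ((hasDerivAt_const t x).fun_sub (hq k)).fun_inv (sub_ne_zero.mpr (hx k))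
  simp only [inv_eq_one_div] at h
  exact h.congr_deriv (by ring)

end PoleSums

section Ansatz

variable {ι : Type*} [Fintype ι] {κ : ℝ} {Q : ι → ℝ → ℝ} {bp : ℝ → ℝ → ℝ}

theorem hasDerivAt_mul_bp_add_v_left (hκ : κ ≠ 0)
    (hbp : ∀ t x, bp t x = -(1 / κ) * ∑ k, 1 / (x - Q k t))
    {v : ℝ → ℝ → ℝ} (hv : ∀ t x, v t x = t - x ^ 2) {t x : ℝ}
    (hQ : ∀ k, DifferentiableAt ℝ (Q k) t) (hx : ∀ k, x ≠ Q k t) :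
    HasDerivAt (fun s => κ * bp s x + v s x) (1 - ∑ k, deriv (Q k) t / (x - Q k t) ^ 2) t := by
  have hfun : (fun s => κ * bp s x + v s x) = fun s => s - x ^ 2 - ∑ k, 1 / (x - Q k s) := by
    ext s
    rw [hbp, hv]
    field_simp
    ring
  rw [hfun]
  exact ((hasDerivAt_id' t).sub_const _).fun_sub
    (hasDerivAt_sum_one_div_sub_apply (fun k => (hQ k).hasDerivAt) hx)

theorem hasDerivAt_bp_right (hbp : ∀ t x, bp t x = -(1 / κ) * ∑ k, 1 / (x - Q k t))
    {t y : ℝ} (hy : ∀ k, y ≠ Q k t) :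
    HasDerivAt (bp t) (1 / κ * ∑ k, 1 / (y - Q k t) ^ 2) y := by
  have h := (hasDerivAt_sum_div_sub_pow (fun _ => 1) (fun k => Q k t) 1 hy).const_mul (-(1 / κ))
  simp only [pow_one, Nat.cast_one, ← funext (hbp t)] at h
  exact h.congr_deriv (by ring)

theorem hasDerivAt_pX_bp (hbp : ∀ t x, bp t x = -(1 / κ) * ∑ k, 1 / (x - Q k t))
    {t x : ℝ} (hx : ∀ k, x ≠ Q k t) :
    HasDerivAt (pX bp t) (1 / κ * (-2 * ∑ k, 1 / (x - Q k t) ^ 3)) x := by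
  have hoff : ∀ᶠ y in nhds x, ∀ k, y ≠ Q k t :=
    Filter.eventually_all.mpr fun k => isOpen_ne.eventually_mem (hx k)
  refine ((hasDerivAt_sum_div_sub_pow (fun _ => 1) (fun k => Q k t) 2 hx).const_mul (1 / κ))
    |>.congr_of_eventuallyEq ?_
  filter_upwards [hoff] with y hy
  exact (hasDerivAt_bp_right hbp hy).deriv

end Ansatz

theorem hasDerivAt_two_mul_b₁_right {κ : ℝ} {N : ℕ} {Q A : Fin N → ℝ → ℝ} {J₀ : ℝ → ℝ}
    {b₁ : ℝ → ℝ → ℝ} (hb₁ : ∀ t x, 2 * b₁ t x = (1 / κ) * ∑ k, A k t / (x - Q k t)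
        - (2 / κ) * ∑ k, Q k t - J₀ t + (1 / (N : ℝ) - 1 / κ) * ∑ k, (x - Q k t))
    {t x : ℝ} (hx : ∀ k, x ≠ Q k t) :
    HasDerivAt (fun y => 2 * b₁ t y)
      (1 / κ * (-1 * ∑ k, A k t / (x - Q k t) ^ 2) + (1 / N - 1 / κ) * N) x := by
  have hpoles := hasDerivAt_sum_div_sub_pow (fun k => A k t) (fun k => Q k t) 1 hx
  have hlin : HasDerivAt (fun y => ∑ k, (y - Q k t)) N x := by
    simpa using HasDerivAt.fun_sum fun k (_ : k ∈ univ) => (hasDerivAt_id' x).sub_const (Q k t)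
  simp only [pow_one, Nat.cast_one] at hpoles
  rw [funext (hb₁ t)]
  exact ((hpoles.const_mul _).sub_const _ |>.sub_const _).fun_add (hlin.const_mul _)

theorem qp2_first_governing_equation_ansatz_general
    (κ : ℝ) (hκ : 0 < κ) (N : ℕ) (hN : 1 ≤ N)
    (Q : Fin N → ℝ → ℝ)
    (hQ : ∀ k, ContDiff ℝ 2 (Q k))
    (hQd : ∀ t, ∀ j k : Fin N, j ≠ k → Q j t ≠ Q k t)
    (J₀ : ℝ → ℝ)
    (v : ℝ → ℝ → ℝ) (hv : ∀ t x, v t x = t - x ^ 2)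
    (R : Fin N → ℝ → ℝ)
    (hR : ∀ k t, R k t = ∑ j ∈ Finset.univ.erase k, 1 / (Q k t - Q j t))
    (A : Fin N → ℝ → ℝ)
    (hA : ∀ k t, A k t = κ * deriv (Q k) t + t - (Q k t) ^ 2 - 2 * R k t)
    (bp b₁ : ℝ → ℝ → ℝ)
    (hbp : ∀ t x, bp t x = -(1 / κ) * ∑ k, 1 / (x - Q k t))
    (hb₁ : ∀ t x, 2 * b₁ t x = (1 / κ) * ∑ k, A k t / (x - Q k t)
        - (2 / κ) * ∑ k, Q k t - J₀ t
        + (1 / (N : ℝ) - 1 / κ) * ∑ k, (x - Q k t)) :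
    ∀ t x, (∀ k, x ≠ Q k t) →
      pT (fun t x => κ * bp t x + v t x) t x
        + pX (fun t x => pX bp t x - bp t x * (κ * bp t x + v t x)
            - 2 * b₁ t x) t x = 0 := by
  intro t x hx
  have hN0 : (N : ℝ) ≠ 0 := Nat.cast_ne_zero.mpr (by omega)
  have hinj : Function.Injective fun k => Q k t := fun j k h =>
    by_contra fun hjk => hQd t j k hjk h
  have h_time := hasDerivAt_mul_bp_add_v_left hκ.ne' hbp hv
    (fun k => (hQ k).differentiable two_ne_zero t) hx
  have hv_x : HasDerivAt (v t) (-(2 * x)) x := by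
    rw [show v t = fun y => t - y ^ 2 from funext (hv t)]
    simpa using (hasDerivAt_pow 2 x).const_sub t
  have hbp_x := hasDerivAt_bp_right hbp hx
  have h_space := ((hasDerivAt_pX_bp hbp hx).fun_sub
    (hbp_x.fun_mul ((hbp_x.const_mul κ).fun_add hv_x))).fun_sub
    (hasDerivAt_two_mul_b₁_right hb₁ hx)
  show deriv _ t + deriv _ x = 0
  rw [h_time.deriv, h_space.deriv]
  simp only [hA, hR, sum_ansatz_coeff_div_sub_sq hinj hx, Fintype.card_fin, hbp, hv]
  field_simp
  ring

/-- for quantum Painlevé II (`σ ≡ 1`, `v = t - x²`, `α ≡ 0`), the pole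
ansatz `b₊ = -(1/κ) Σ_k 1/(x - Q_k)` together with the formula (3.12)/(3.14) for
`b₁` (with arbitrary `J₀`) satisfies the first governing equation (3.1) identically
away from the poles. -/
theorem qp2_first_governing_equation_ansatz
    (κ : ℝ) (hκ : 0 < κ) (N : ℕ) (hN : 1 ≤ N)
    (Q : Fin N → ℝ → ℝ)
    (hQ : ∀ k, ContDiff ℝ 2 (Q k))
    (hQd : ∀ t, ∀ j k : Fin N, j ≠ k → Q j t ≠ Q k t)
    (J₀ : ℝ → ℝ) (hJ₀ : ContDiff ℝ 1 J₀)
    (v : ℝ → ℝ → ℝ) (hv : ∀ t x, v t x = t - x ^ 2)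
    (R : Fin N → ℝ → ℝ)
    (hR : ∀ k t, R k t = ∑ j ∈ Finset.univ.erase k, 1 / (Q k t - Q j t))
    (A : Fin N → ℝ → ℝ)
    (hA : ∀ k t, A k t = κ * deriv (Q k) t + t - (Q k t) ^ 2 - 2 * R k t)
    (bp b₁ : ℝ → ℝ → ℝ)
    (hbp : ∀ t x, bp t x = -(1 / κ) * ∑ k, 1 / (x - Q k t))
    (hb₁ : ∀ t x, 2 * b₁ t x = (1 / κ) * ∑ k, A k t / (x - Q k t)
        - (2 / κ) * ∑ k, Q k t - J₀ t
        + (1 / (N : ℝ) - 1 / κ) * ∑ k, (x - Q k t)) :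
    ∀ t x, (∀ k, x ≠ Q k t) →
      pT (fun t x => κ * bp t x + v t x) t x
        + pX (fun t x => pX bp t x - bp t x * (κ * bp t x + v t x)
            - 2 * b₁ t x) t x = 0 :=
  qp2_first_governing_equation_ansatz_general κ hκ N hN Q hQ hQd J₀ v hv R hR A hA bp b₁ hbp hb₁
end

section
/- Let n ≥ 1, let Q₁, …, Q_n be pairwise distinct real numbers and A₁, …, A_n arbitrary real numbers. Set Φ_m = Σ_{l≠m} (A_m − A_l)/(Q_m − Q_l) and R_j = Σ_{l≠j} 1/(Q_j − Q_l). Then for every index k: Σ_{j≠k} (1/(Q_k − Q_j)) · [ (Φ_k − Φ_j − (A_k − A_j)·R_j)/(Q_k − Q_j) + Σ_{l≠j} (A_j − A_l)/(Q_j − Q_l)² ] = 0. -/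
/-!
Expanding `Φ` and `R`, the `j`-th summand becomes a sum over `l ∉ {j, k}` of `pairTerm Q A k j l`:
the terms `l = j` (from `Φ k`) and `l = k` (from the last sum) cancel each other, and the term
`l = k` of `Φ j + (A k - A j) R j = Σ_{l ≠ j} (A k - A l)/(Q j - Q l)` is zero. For distinct `Q`'s,
`pairTerm Q A k j l` is antisymmetric in `(j, l)`, so the double sum over ordered pairs of distinct
indices vanishes.
-/

open Finset

theorem Finset.sum_sum_erase_eq_zero_of_antisymm_s11 {ι M : Type*} [DecidableEq ι] [AddCommMonoid M]
    (s : Finset ι) (F : ι → ι → M) (hF : ∀ j ∈ s, ∀ l ∈ s, j ≠ l → F j l + F l j = 0) :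
    ∑ j ∈ s, ∑ l ∈ s.erase j, F j l = 0 := by
  rw [← Finset.sum_finset_product' s.offDiag _ _ fun p => by grind]
  refine Finset.sum_involution (fun p _ => p.swap) (fun p hp => ?_) (fun p hp _ => ?_)
    (fun p hp => by grind) (fun p _ => p.swap_swap)
  · obtain ⟨hj, hl, hjl⟩ := mem_offDiag.1 hp
    exact hF _ hj _ hl hjl
  · exact fun h => (mem_offDiag.1 hp).2.2 (congrArg Prod.snd h)

section

variable {ι K : Type*} [Field K]

def pairTerm (Q A : ι → K) (k j l : ι) : K :=
  1 / (Q k - Q j) * (((A k - A l) / (Q k - Q l) - (A k - A l) / (Q j - Q l)) / (Q k - Q j)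
    + (A j - A l) / (Q j - Q l) ^ 2)

theorem pairTerm_add_pairTerm_swap {Q : ι → K} (A : ι → K) {k j l : ι} (hkj : Q k ≠ Q j)
    (hkl : Q k ≠ Q l) (hjl : Q j ≠ Q l) : pairTerm Q A k j l + pairTerm Q A k l j = 0 := by
  have := sub_ne_zero.2 hkj
  have := sub_ne_zero.2 hkl
  have := sub_ne_zero.2 hjl
  have := sub_ne_zero.2 hjl.symm
  unfold pairTerm
  field_simp
  ring

theorem sum_div_add_mul_sum_one_div (s : Finset ι) (Q A : ι → K) (j k : ι) :
    ∑ l ∈ s, (A j - A l) / (Q j - Q l) + (A k - A j) * ∑ l ∈ s, 1 / (Q j - Q l)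
      = ∑ l ∈ s, (A k - A l) / (Q j - Q l) := by
  rw [mul_sum, ← sum_add_distrib]
  exact sum_congr rfl fun l _ => by ring

theorem summand_eq_sum_pairTerm [DecidableEq ι] {s : Finset ι} (Q A : ι → K) {j k : ι}
    (hk : k ∈ s) (hj : j ∈ s) (hjk : j ≠ k) :
    1 / (Q k - Q j) * ((∑ l ∈ s.erase k, (A k - A l) / (Q k - Q l)
        - ∑ l ∈ s.erase j, (A j - A l) / (Q j - Q l)
        - (A k - A j) * ∑ l ∈ s.erase j, 1 / (Q j - Q l)) / (Q k - Q j)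
      + ∑ l ∈ s.erase j, (A j - A l) / (Q j - Q l) ^ 2)
      = ∑ l ∈ (s.erase k).erase j, pairTerm Q A k j l := by
  have hj' : j ∈ s.erase k := mem_erase.2 ⟨hjk, hj⟩
  have hk' : k ∈ s.erase j := mem_erase.2 ⟨hjk.symm, hk⟩
  rw [sub_sub, sum_div_add_mul_sum_one_div, ← add_sum_erase _ _ hj',
    ← add_sum_erase (s.erase j) (fun l => (A k - A l) / (Q j - Q l)) hk',
    ← add_sum_erase (s.erase j) (fun l => (A j - A l) / (Q j - Q l) ^ 2) hk', erase_right_comm]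
  simp only [pairTerm, ← mul_sum, sum_add_distrib, ← sum_div, sum_sub_distrib, sub_self, zero_div]
  rw [sub_sq_comm (Q j)]
  -- `ring` only simplifies inverses of atoms
  generalize Q k - Q j = d
  ring

end

theorem appendix_A_sum_vanishes_general
    (n : ℕ)
    (Q A : Fin n → ℝ)
    (hQd : ∀ i j : Fin n, i ≠ j → Q i ≠ Q j)
    (Φ R : Fin n → ℝ)
    (hΦ : ∀ m, Φ m = ∑ l ∈ Finset.univ.erase m, (A m - A l) / (Q m - Q l))
    (hR : ∀ j, R j = ∑ l ∈ Finset.univ.erase j, 1 / (Q j - Q l)) :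
    ∀ k : Fin n,
      ∑ j ∈ Finset.univ.erase k,
        (1 / (Q k - Q j))
          * ((Φ k - Φ j - (A k - A j) * R j) / (Q k - Q j)
            + ∑ l ∈ Finset.univ.erase j, (A j - A l) / (Q j - Q l) ^ 2) = 0 := by
  intro k
  rw [← (univ.erase k).sum_sum_erase_eq_zero_of_antisymm_s11 (pairTerm Q A k) fun j hj l hl hjl =>
    pairTerm_add_pairTerm_swap A (hQd _ _ (ne_of_mem_erase hj).symm)
      (hQd _ _ (ne_of_mem_erase hl).symm) (hQd _ _ hjl)]
  refine sum_congr rfl fun j hj => ?_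
  rw [hΦ, hΦ, hR, summand_eq_sum_pairTerm Q A (mem_univ k) (mem_univ j) (ne_of_mem_erase hj)]

/-- Appendix A identity: for pairwise distinct `Q_j` and arbitrary
`A_j`, with `Φ_m = Σ_{l≠m} (A_m - A_l)/(Q_m - Q_l)` and `R_j = Σ_{l≠j} 1/(Q_j - Q_l)`,
the sum appearing in (A11) vanishes. -/
theorem appendix_A_sum_vanishes
    (n : ℕ) (hn : 1 ≤ n)
    (Q A : Fin n → ℝ)
    (hQd : ∀ i j : Fin n, i ≠ j → Q i ≠ Q j)
    (Φ R : Fin n → ℝ)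
    (hΦ : ∀ m, Φ m = ∑ l ∈ Finset.univ.erase m, (A m - A l) / (Q m - Q l))
    (hR : ∀ j, R j = ∑ l ∈ Finset.univ.erase j, 1 / (Q j - Q l)) :
    ∀ k : Fin n,
      ∑ j ∈ Finset.univ.erase k,
        (1 / (Q k - Q j))
          * ((Φ k - Φ j - (A k - A j) * R j) / (Q k - Q j)
            + ∑ l ∈ Finset.univ.erase j, (A j - A l) / (Q j - Q l) ^ 2) = 0 :=
  appendix_A_sum_vanishes_general n Q A hQd Φ R hΦ hR
end

section
/- Let n ≥ 1, let Q₁, …, Q_n be pairwise distinct real numbers, and set R_k = Σ_{j≠k} 1/(Q_k − Q_j). Then for every index k: Σ_{j≠k} (R_k − R_j)/(Q_k − Q_j)² = Σ_{j≠k} 2/(Q_k − Q_j)³. -/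
open scoped BigOperators

private lemma antisym_sum_zero {ι : Type*} [DecidableEq ι] (s : Finset ι) (g : ι → ι → ℝ)
    (hg : ∀ i j, g i j = - g j i) :
    ∑ i ∈ s, ∑ j ∈ s.erase i, g i j = 0 := by
  have hswap : ∑ i ∈ s, ∑ j ∈ s.erase i, g i j = ∑ j ∈ s, ∑ i ∈ s.erase j, g i j := by
    refine Finset.sum_comm' ?_
    intro x y
    constructor
    · rintro ⟨hx, hy⟩
      exact ⟨Finset.mem_erase.2 ⟨(Finset.ne_of_mem_erase hy).symm, hx⟩,
        Finset.mem_of_mem_erase hy⟩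
    · rintro ⟨hx, hy⟩
      exact ⟨Finset.mem_of_mem_erase hx,
        Finset.mem_erase.2 ⟨(Finset.ne_of_mem_erase hx).symm, hy⟩⟩
  have hneg : ∑ j ∈ s, ∑ i ∈ s.erase j, g i j
      = - ∑ i ∈ s, ∑ j ∈ s.erase i, g i j := by
    rw [← Finset.sum_neg_distrib]
    refine Finset.sum_congr rfl fun j _ => ?_
    rw [← Finset.sum_neg_distrib]
    exact Finset.sum_congr rfl fun i _ => hg i j
  have : ∑ i ∈ s, ∑ j ∈ s.erase i, g i j = - ∑ i ∈ s, ∑ j ∈ s.erase i, g i j :=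
    hswap.trans hneg
  linarith

/-- Appendix B identity: with `R_k = Σ_{j≠k} 1/(Q_k - Q_j)`,
`Σ_{j≠k} (R_k - R_j)/(Q_k - Q_j)² = Σ_{j≠k} 2/(Q_k - Q_j)³`. -/
theorem R_difference_sum_identity
    (n : ℕ) (hn : 1 ≤ n)
    (Q : Fin n → ℝ)
    (hQd : ∀ i j : Fin n, i ≠ j → Q i ≠ Q j)
    (R : Fin n → ℝ)
    (hR : ∀ k, R k = ∑ j ∈ Finset.univ.erase k, 1 / (Q k - Q j)) :
    ∀ k : Fin n,
      ∑ j ∈ Finset.univ.erase k, (R k - R j) / (Q k - Q j) ^ 2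
        = ∑ j ∈ Finset.univ.erase k, 2 / (Q k - Q j) ^ 3 := by
  intro k
  have hne : ∀ i j : Fin n, i ≠ j → Q i - Q j ≠ 0 :=
    fun i j h => sub_ne_zero.2 (hQd i j h)
  set s : Finset (Fin n) := Finset.univ.erase k with hs
  set g : Fin n → Fin n → ℝ :=
    fun j m => -(1 / ((Q k - Q j) * ((Q k - Q m) * (Q j - Q m)))) with hgdef
  have hg : ∀ i j, g i j = - g j i := by
    intro i j
    simp only [hgdef, neg_neg]
    rw [show (Q k - Q j) * ((Q k - Q i) * (Q j - Q i))
        = -((Q k - Q i) * ((Q k - Q j) * (Q i - Q j))) from by ring, div_neg]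
  have key : ∀ j ∈ s, (R k - R j) / (Q k - Q j) ^ 2
      = 2 / (Q k - Q j) ^ 3 + ∑ m ∈ s.erase j, g j m := by
    intro j hj
    have hjk : j ≠ k := Finset.ne_of_mem_erase hj
    have hd : Q k - Q j ≠ 0 := hne k j (Ne.symm hjk)
    have hRk : R k = 1 / (Q k - Q j) + ∑ m ∈ s.erase j, 1 / (Q k - Q m) := by
      rw [hR k, ← Finset.add_sum_erase _ _ hj]
    have hRj : R j = 1 / (Q j - Q k) + ∑ m ∈ s.erase j, 1 / (Q j - Q m) := by
      have hk : k ∈ Finset.univ.erase j :=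
        Finset.mem_erase.2 ⟨Ne.symm hjk, Finset.mem_univ k⟩
      rw [hR j, ← Finset.add_sum_erase _ _ hk,
        show (Finset.univ.erase j).erase k = s.erase j from by
          ext x; simp [hs, Finset.mem_erase]; tauto]
    have hdiff : R k - R j
        = 2 / (Q k - Q j) + ∑ m ∈ s.erase j, (1 / (Q k - Q m) - 1 / (Q j - Q m)) := by
      rw [hRk, hRj, Finset.sum_sub_distrib,
        show Q j - Q k = -(Q k - Q j) from (neg_sub _ _).symm, div_neg]
      ring
    have hterm : ∀ m ∈ s.erase j,
        (1 / (Q k - Q m) - 1 / (Q j - Q m)) / (Q k - Q j) ^ 2 = g j m := by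
      intro m hm
      have hmj : m ≠ j := Finset.ne_of_mem_erase hm
      have hmk : m ≠ k := Finset.ne_of_mem_erase (Finset.mem_of_mem_erase hm)
      have ha : Q k - Q m ≠ 0 := hne k m (Ne.symm hmk)
      have hb : Q j - Q m ≠ 0 := hne j m (Ne.symm hmj)
      simp only [hgdef]
      field_simp
      ring
    rw [hdiff, add_div, Finset.sum_div, Finset.sum_congr rfl hterm,
      div_div, show (Q k - Q j) * (Q k - Q j) ^ 2 = (Q k - Q j) ^ 3 from by ring]
  rw [Finset.sum_congr rfl key, Finset.sum_add_distrib, antisym_sum_zero s g hg, add_zero]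
end

section
/- (Appendix B: equivalence of equation (3.22) with the first integrals (3.30).) Let κ ≥ 1 be an integer, t ∈ ℝ, let Q₁, …, Q_κ be pairwise distinct real numbers, P₁, …, P_κ and U real numbers, and set J₀ = (t²/2 + U − Σ_{j=1}^κ Q_j)/κ, R_k = Σ_{j≠k} 1/(Q_k − Q_j), A_k = P_k + t − Q_k² − 2·R_k. Then for each fixed k the equation (P_k − t + Q_k²)·A_k = 2·(Σ_{j≠k} A_j/(Q_k − Q_j) − 2·Σ_{j=1}^κ Q_j − κ·J₀) holds if and only if P_k²/2 + t·Q_k² − Q_k⁴/2 − (κ−2)·Q_k − Σ_{j≠k} 2/(Q_k − Q_j)² + U − Σ_{j≠k} (P_k + P_j)/(Q_k − Q_j) + Σ_{j≠k} Σ_{l≠k,j} 2/((Q_k − Q_j)·(Q_j − Q_l)) = 0. -/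
open scoped BigOperators

/-- Appendix B: pointwise algebraic equivalence of equation (3.22)
with the first integrals (3.30), where `P_k` stands for `κ Q_k'`. -/
theorem eq322_iff_first_integral
    (κ : ℕ) (hκ : 1 ≤ κ) (t : ℝ)
    (Q P : Fin κ → ℝ) (U : ℝ)
    (hQd : ∀ i j : Fin κ, i ≠ j → Q i ≠ Q j)
    (J₀ : ℝ) (hJ₀ : J₀ = (t ^ 2 / 2 + U - ∑ j, Q j) / (κ : ℝ))
    (R : Fin κ → ℝ)
    (hR : ∀ k, R k = ∑ j ∈ Finset.univ.erase k, 1 / (Q k - Q j))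
    (A : Fin κ → ℝ)
    (hA : ∀ k, A k = P k + t - (Q k) ^ 2 - 2 * R k) :
    ∀ k : Fin κ,
      ((P k - t + (Q k) ^ 2) * A k
          = 2 * ((∑ j ∈ Finset.univ.erase k, A j / (Q k - Q j))
              - 2 * ∑ j, Q j - (κ : ℝ) * J₀))
      ↔
      ((P k) ^ 2 / 2 + t * (Q k) ^ 2 - (Q k) ^ 4 / 2 - ((κ : ℝ) - 2) * Q k
          - (∑ j ∈ Finset.univ.erase k, 2 / (Q k - Q j) ^ 2)
          + U
          - (∑ j ∈ Finset.univ.erase k, (P k + P j) / (Q k - Q j))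
          + (∑ j ∈ Finset.univ.erase k, ∑ l ∈ (Finset.univ.erase k).erase j,
              2 / ((Q k - Q j) * (Q j - Q l))) = 0) := by
  intro k
  have hκ0 : (κ : ℝ) ≠ 0 := Nat.cast_ne_zero.mpr (by omega)
  have hk0 : ∀ j ∈ Finset.univ.erase k, Q k - Q j ≠ 0 := by
    intro j hj
    exact sub_ne_zero.mpr (hQd k j (Ne.symm (Finset.ne_of_mem_erase hj)))
  have hcard : ((Finset.univ.erase k).card : ℝ) = (κ : ℝ) - 1 := by
    have h1 : (Finset.univ.erase k).card = κ - 1 := by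
      rw [Finset.card_erase_of_mem (Finset.mem_univ k), Finset.card_univ, Fintype.card_fin]
    rw [h1, Nat.cast_sub hκ, Nat.cast_one]
  have hStot : ∑ j, Q j = Q k + ∑ j ∈ Finset.univ.erase k, Q j :=
    (Finset.add_sum_erase _ _ (Finset.mem_univ k)).symm
  have hJ : (κ : ℝ) * J₀ = t ^ 2 / 2 + U - (Q k + ∑ j ∈ Finset.univ.erase k, Q j) := by
    rw [hJ₀, hStot]
    field_simp
  -- split R j over the erased sum
  have hRj : ∀ j ∈ Finset.univ.erase k,
      R j = 1 / (Q j - Q k) + ∑ l ∈ (Finset.univ.erase k).erase j, 1 / (Q j - Q l) := by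
    intro j hj
    have hjk : j ≠ k := Finset.ne_of_mem_erase hj
    have huniv : Finset.univ.erase j = insert k ((Finset.univ.erase k).erase j) := by
      ext x
      simp only [Finset.mem_erase, Finset.mem_insert, Finset.mem_univ, and_true]
      constructor
      · intro hx
        by_cases hxk : x = k
        · exact Or.inl hxk
        · exact Or.inr ⟨hx, hxk⟩
      · rintro (rfl | ⟨h1, _⟩)
        · exact Ne.symm hjk
        · exact h1
    rw [hR j, huniv, Finset.sum_insert (by simp)]
  -- rewrite the double sum
  have hdouble : ∀ j ∈ Finset.univ.erase k,
      (∑ l ∈ (Finset.univ.erase k).erase j, 2 / ((Q k - Q j) * (Q j - Q l)))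
        = 2 / (Q k - Q j) * (R j + 1 / (Q k - Q j)) := by
    intro j hj
    have ha := hk0 j hj
    have hz : (1 : ℝ) / (Q j - Q k) = -(1 / (Q k - Q j)) := by
      rw [← neg_sub (Q k) (Q j), div_neg]
    calc ∑ l ∈ (Finset.univ.erase k).erase j, 2 / ((Q k - Q j) * (Q j - Q l))
        = ∑ l ∈ (Finset.univ.erase k).erase j, 2 / (Q k - Q j) * (1 / (Q j - Q l)) :=
          Finset.sum_congr rfl (fun l _ => by rw [div_mul_div_comm, mul_one])
      _ = 2 / (Q k - Q j) * ∑ l ∈ (Finset.univ.erase k).erase j, 1 / (Q j - Q l) :=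
          (Finset.mul_sum _ _ _).symm
      _ = 2 / (Q k - Q j) * (R j + 1 / (Q k - Q j)) := by
          rw [hRj j hj, hz]; ring
  -- the per-term merged identity
  have merged : ∑ j ∈ Finset.univ.erase k,
      (2 * (P k - t + Q k ^ 2) * (1 / (Q k - Q j)) + 2 * (A j / (Q k - Q j))
        + 2 * (2 / (Q k - Q j) * (R j + 1 / (Q k - Q j))))
      = ∑ j ∈ Finset.univ.erase k,
      (2 * Q j + 2 * Q k + 2 * ((P k + P j) / (Q k - Q j)) + 2 * (2 / (Q k - Q j) ^ 2)) := by
    refine Finset.sum_congr rfl (fun j hj => ?_)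
    have ha := hk0 j hj
    rw [hA j]
    field_simp
    ring
  have splitL : ∑ j ∈ Finset.univ.erase k,
      (2 * (P k - t + Q k ^ 2) * (1 / (Q k - Q j)) + 2 * (A j / (Q k - Q j))
        + 2 * (2 / (Q k - Q j) * (R j + 1 / (Q k - Q j))))
      = 2 * (P k - t + Q k ^ 2) * (∑ j ∈ Finset.univ.erase k, 1 / (Q k - Q j))
        + 2 * (∑ j ∈ Finset.univ.erase k, A j / (Q k - Q j))
        + 2 * (∑ j ∈ Finset.univ.erase k, 2 / (Q k - Q j) * (R j + 1 / (Q k - Q j))) := by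
    rw [Finset.sum_add_distrib, Finset.sum_add_distrib, ← Finset.mul_sum, ← Finset.mul_sum,
      ← Finset.mul_sum]
  have splitR : ∑ j ∈ Finset.univ.erase k,
      (2 * Q j + 2 * Q k + 2 * ((P k + P j) / (Q k - Q j)) + 2 * (2 / (Q k - Q j) ^ 2))
      = 2 * (∑ j ∈ Finset.univ.erase k, Q j)
        + ((Finset.univ.erase k).card : ℝ) * (2 * Q k)
        + 2 * (∑ j ∈ Finset.univ.erase k, (P k + P j) / (Q k - Q j))
        + 2 * (∑ j ∈ Finset.univ.erase k, 2 / (Q k - Q j) ^ 2) := by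
    rw [Finset.sum_add_distrib, Finset.sum_add_distrib, Finset.sum_add_distrib,
      ← Finset.mul_sum, ← Finset.mul_sum, ← Finset.mul_sum, ← Finset.mul_sum,
      Finset.sum_const, nsmul_eq_mul]
    ring
  have mergedEq := (splitL.symm.trans merged).trans splitR
  have key : (P k - t + (Q k) ^ 2) * A k
      - 2 * ((∑ j ∈ Finset.univ.erase k, A j / (Q k - Q j))
          - 2 * ∑ j, Q j - (κ : ℝ) * J₀)
      = 2 * ((P k) ^ 2 / 2 + t * (Q k) ^ 2 - (Q k) ^ 4 / 2 - ((κ : ℝ) - 2) * Q k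
          - (∑ j ∈ Finset.univ.erase k, 2 / (Q k - Q j) ^ 2)
          + U
          - (∑ j ∈ Finset.univ.erase k, (P k + P j) / (Q k - Q j))
          + (∑ j ∈ Finset.univ.erase k, ∑ l ∈ (Finset.univ.erase k).erase j,
              2 / ((Q k - Q j) * (Q j - Q l)))) := by
    rw [hJ, hA k, hR k, hStot, Finset.sum_congr rfl hdouble]
    linear_combination (-1 : ℝ) * mergedEq + (-2 * Q k) * hcard
  constructor
  · intro h
    linarith [key]
  · intro h
    linarith [key]
end

section
/- (Commutativity of the generalized momentum operators.) Let n ≥ 1 and let D = {(Q, P) ∈ ℝⁿ × ℝⁿ : Q_i ≠ Q_j for all i ≠ j}. For k ≠ j let s_{kj} : D → D be the map swapping the k-th and j-th coordinates of both Q and P. For f : D → ℝ define the operator P̂_k by (P̂_k f)(Q, P) = P_k · f(Q, P) − Σ_{j≠k} (2/(Q_k − Q_j)) · f(s_{kj}(Q, P)). Then for all indices k, m ∈ {1, …, n} and every function f : D → ℝ, the operators commute: P̂_k(P̂_m f) = P̂_m(P̂_k f) on D. -/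
open scoped BigOperators

/-- The swap `s_{kj}` exchanging the `k`-th and `j`-th coordinates of both `Q` and `P`. -/
def swapQP {n : ℕ} (k j : Fin n) (QP : (Fin n → ℝ) × (Fin n → ℝ)) :
    (Fin n → ℝ) × (Fin n → ℝ) :=
  (QP.1 ∘ Equiv.swap k j, QP.2 ∘ Equiv.swap k j)

/-- The generalized momentum operator
`(P̂_k f)(Q, P) = P_k f(Q, P) - Σ_{j≠k} (2/(Q_k - Q_j)) f(s_{kj}(Q, P))`. -/
noncomputable def momOp {n : ℕ} (k : Fin n)
    (f : (Fin n → ℝ) × (Fin n → ℝ) → ℝ) :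
    (Fin n → ℝ) × (Fin n → ℝ) → ℝ :=
  fun QP => QP.2 k * f QP
    - ∑ j ∈ Finset.univ.erase k, (2 / (QP.1 k - QP.1 j)) * f (swapQP k j QP)

/- Auxiliary machinery -/

noncomputable def FF {n : ℕ} (f : (Fin n → ℝ) × (Fin n → ℝ) → ℝ) (Q P : Fin n → ℝ)
    (σ : Equiv.Perm (Fin n)) : ℝ := f (Q ∘ ⇑σ, P ∘ ⇑σ)

noncomputable def cc {n : ℕ} (Q : Fin n → ℝ) (a b : Fin n) : ℝ := 2 / (Q a - Q b)

lemma swap3_1 {α} [DecidableEq α] {k m j : α} (hkm : k ≠ m) (hkj : k ≠ j) (hmj : m ≠ j) :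
    Equiv.swap k m * Equiv.swap m j = Equiv.swap k j * Equiv.swap m k := by
  ext x; simp only [Equiv.Perm.mul_apply, Equiv.swap_apply_def]; split_ifs <;> simp_all

lemma swap3_2 {α} [DecidableEq α] {k m j : α} (hkm : k ≠ m) (hkj : k ≠ j) (hmj : m ≠ j) :
    Equiv.swap m j * Equiv.swap k j = Equiv.swap k j * Equiv.swap m k := by
  ext x; simp only [Equiv.Perm.mul_apply, Equiv.swap_apply_def]; split_ifs <;> simp_all

lemma swap3_3 {α} [DecidableEq α] {k m j : α} (hkm : k ≠ m) (hkj : k ≠ j) (hmj : m ≠ j) :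
    Equiv.swap m j * Equiv.swap k m = Equiv.swap k j * Equiv.swap m j := by
  ext x; simp only [Equiv.Perm.mul_apply, Equiv.swap_apply_def]; split_ifs <;> simp_all

lemma swap3_4 {α} [DecidableEq α] {k m j : α} (hkm : k ≠ m) (hkj : k ≠ j) (hmj : m ≠ j) :
    Equiv.swap m k * Equiv.swap k j = Equiv.swap k j * Equiv.swap m j := by
  ext x; simp only [Equiv.Perm.mul_apply, Equiv.swap_apply_def]; split_ifs <;> simp_all

lemma swap_disj {α} [DecidableEq α] {k m j l : α} (h1 : m ≠ k) (h2 : m ≠ l) (h3 : j ≠ k) (h4 : j ≠ l) :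
    Equiv.swap m j * Equiv.swap k l = Equiv.swap k l * Equiv.swap m j := by
  ext x; simp only [Equiv.Perm.mul_apply, Equiv.swap_apply_def]; split_ifs <;> simp_all

/-- Canonical expansion of a double momentum operator. -/
lemma canon {n : ℕ} (f : (Fin n → ℝ) × (Fin n → ℝ) → ℝ) (Q P : Fin n → ℝ)
    (a b : Fin n) (hab : a ≠ b) :
    momOp a (momOp b f) (Q, P)
      = P a * (P b * FF f Q P 1
          - (cc Q b a * FF f Q P (Equiv.swap b a)
             + ∑ l ∈ (Finset.univ.erase a).erase b, cc Q b l * FF f Q P (Equiv.swap b l)))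
        - (cc Q a b * (P a * FF f Q P (Equiv.swap a b)
              - (cc Q a b * FF f Q P 1
                 + ∑ l ∈ (Finset.univ.erase a).erase b,
                     cc Q a l * FF f Q P (Equiv.swap a b * Equiv.swap b l)))
           + ∑ j ∈ (Finset.univ.erase a).erase b,
               cc Q a j * (P b * FF f Q P (Equiv.swap a j)
                 - (cc Q b j * FF f Q P (Equiv.swap a j * Equiv.swap b a)
                    + (cc Q b a * FF f Q P (Equiv.swap a j * Equiv.swap b j)
                       + ∑ l ∈ ((Finset.univ.erase a).erase b).erase j,
                           cc Q b l * FF f Q P (Equiv.swap a j * Equiv.swap b l))))) := by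
  have hbmem : b ∈ Finset.univ.erase a := Finset.mem_erase.mpr ⟨hab.symm, Finset.mem_univ b⟩
  have hamem : a ∈ Finset.univ.erase b := Finset.mem_erase.mpr ⟨hab, Finset.mem_univ a⟩
  have hE : (Finset.univ.erase b).erase a = (Finset.univ.erase a).erase b :=
    Finset.erase_right_comm
  have inner0 : momOp b f (Q, P)
      = P b * FF f Q P 1
        - (cc Q b a * FF f Q P (Equiv.swap b a)
           + ∑ l ∈ (Finset.univ.erase a).erase b, cc Q b l * FF f Q P (Equiv.swap b l)) := by
    have e : momOp b f (Q, P)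
        = P b * FF f Q P 1
          - ∑ l ∈ Finset.univ.erase b, cc Q b l * FF f Q P (Equiv.swap b l) := rfl
    rw [e, ← Finset.add_sum_erase _ _ hamem, hE]
  have innerb : momOp b f (Q ∘ ⇑(Equiv.swap a b), P ∘ ⇑(Equiv.swap a b))
      = P a * FF f Q P (Equiv.swap a b)
        - (cc Q a b * FF f Q P 1
           + ∑ l ∈ (Finset.univ.erase a).erase b,
               cc Q a l * FF f Q P (Equiv.swap a b * Equiv.swap b l)) := by
    have e : momOp b f (Q ∘ ⇑(Equiv.swap a b), P ∘ ⇑(Equiv.swap a b))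
        = P (Equiv.swap a b b) * FF f Q P (Equiv.swap a b)
          - ∑ l ∈ Finset.univ.erase b,
              (2 / (Q (Equiv.swap a b b) - Q (Equiv.swap a b l)))
                * FF f Q P (Equiv.swap a b * Equiv.swap b l) := rfl
    rw [e, ← Finset.add_sum_erase _ _ hamem, hE, Equiv.swap_apply_right, Equiv.swap_apply_left,
      Equiv.swap_comm b a, Equiv.swap_mul_self]
    have hsum : ∑ l ∈ (Finset.univ.erase a).erase b,
        (2 / (Q a - Q (Equiv.swap a b l))) * FF f Q P (Equiv.swap a b * Equiv.swap b l)
        = ∑ l ∈ (Finset.univ.erase a).erase b,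
            cc Q a l * FF f Q P (Equiv.swap a b * Equiv.swap b l) := by
      refine Finset.sum_congr rfl fun l hl => ?_
      obtain ⟨hlb, hla⟩ := by simpa [Finset.mem_erase] using hl
      rw [Equiv.swap_apply_of_ne_of_ne hla hlb]
      rfl
    rw [hsum]
    rfl
  have innerE : ∀ j ∈ (Finset.univ.erase a).erase b,
      cc Q a j * momOp b f (Q ∘ ⇑(Equiv.swap a j), P ∘ ⇑(Equiv.swap a j))
      = cc Q a j * (P b * FF f Q P (Equiv.swap a j)
          - (cc Q b j * FF f Q P (Equiv.swap a j * Equiv.swap b a)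
             + (cc Q b a * FF f Q P (Equiv.swap a j * Equiv.swap b j)
                + ∑ l ∈ ((Finset.univ.erase a).erase b).erase j,
                    cc Q b l * FF f Q P (Equiv.swap a j * Equiv.swap b l)))) := by
    intro j hj
    obtain ⟨hjb, hja⟩ := by simpa [Finset.mem_erase] using hj
    have e : momOp b f (Q ∘ ⇑(Equiv.swap a j), P ∘ ⇑(Equiv.swap a j))
        = P (Equiv.swap a j b) * FF f Q P (Equiv.swap a j)
          - ∑ l ∈ Finset.univ.erase b,
              (2 / (Q (Equiv.swap a j b) - Q (Equiv.swap a j l)))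
                * FF f Q P (Equiv.swap a j * Equiv.swap b l) := rfl
    rw [e, ← Finset.add_sum_erase _ _ hamem, hE, ← Finset.add_sum_erase _ _ hj,
      Equiv.swap_apply_of_ne_of_ne hab.symm (Ne.symm hjb), Equiv.swap_apply_left,
      Equiv.swap_apply_right]
    have hsum : ∑ l ∈ ((Finset.univ.erase a).erase b).erase j,
        (2 / (Q b - Q (Equiv.swap a j l))) * FF f Q P (Equiv.swap a j * Equiv.swap b l)
        = ∑ l ∈ ((Finset.univ.erase a).erase b).erase j,
            cc Q b l * FF f Q P (Equiv.swap a j * Equiv.swap b l) := by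
      refine Finset.sum_congr rfl fun l hl => ?_
      obtain ⟨hlj, hlb, hla⟩ := by simpa [Finset.mem_erase] using hl
      rw [Equiv.swap_apply_of_ne_of_ne hla hlj]
      rfl
    rw [hsum]
    rfl
  have step0 : momOp a (momOp b f) (Q, P)
      = P a * momOp b f (Q, P)
        - ∑ j ∈ Finset.univ.erase a,
            cc Q a j * momOp b f (Q ∘ ⇑(Equiv.swap a j), P ∘ ⇑(Equiv.swap a j)) := rfl
  rw [step0, ← Finset.add_sum_erase _ _ hbmem, inner0, innerb,
    Finset.sum_congr rfl innerE]

/-- the generalized momentum operators `P̂_k` commute on the domain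
`D` where the `Q`-coordinates are pairwise distinct. -/
theorem momentum_operators_commute
    (n : ℕ) (hn : 1 ≤ n) (k m : Fin n)
    (f : (Fin n → ℝ) × (Fin n → ℝ) → ℝ)
    (Q P : Fin n → ℝ)
    (hQd : ∀ i j : Fin n, i ≠ j → Q i ≠ Q j) :
    momOp k (momOp m f) (Q, P) = momOp m (momOp k f) (Q, P) := by
  rcases eq_or_ne k m with rfl | hkm
  · rfl
  have dkm : Q k - Q m ≠ 0 := sub_ne_zero.mpr (hQd k m hkm)
  have dmk : Q m - Q k ≠ 0 := sub_ne_zero.mpr (hQd m k hkm.symm)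
  have hF : FF f Q P (Equiv.swap m k) = FF f Q P (Equiv.swap k m) := by
    rw [Equiv.swap_comm]
  have hc : cc Q m k = -cc Q k m := by
    simp only [cc]
    rw [show Q m - Q k = -(Q k - Q m) by ring, div_neg]
  -- distribution of the big j-sums
  have hS3 : ∑ j ∈ (Finset.univ.erase k).erase m,
        cc Q k j * (P m * FF f Q P (Equiv.swap k j)
          - (cc Q m j * FF f Q P (Equiv.swap k j * Equiv.swap m k)
             + (cc Q m k * FF f Q P (Equiv.swap k j * Equiv.swap m j)
                + ∑ l ∈ ((Finset.univ.erase k).erase m).erase j,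
                    cc Q m l * FF f Q P (Equiv.swap k j * Equiv.swap m l))))
      = P m * ∑ j ∈ (Finset.univ.erase k).erase m, cc Q k j * FF f Q P (Equiv.swap k j)
        - ∑ j ∈ (Finset.univ.erase k).erase m,
            cc Q k j * (cc Q m j * FF f Q P (Equiv.swap k j * Equiv.swap m k))
        - ∑ j ∈ (Finset.univ.erase k).erase m,
            cc Q k j * (cc Q m k * FF f Q P (Equiv.swap k j * Equiv.swap m j))
        - ∑ j ∈ (Finset.univ.erase k).erase m,
            ∑ l ∈ ((Finset.univ.erase k).erase m).erase j,
              cc Q k j * (cc Q m l * FF f Q P (Equiv.swap k j * Equiv.swap m l)) := by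
    rw [Finset.mul_sum, ← Finset.sum_sub_distrib, ← Finset.sum_sub_distrib,
      ← Finset.sum_sub_distrib]
    refine Finset.sum_congr rfl fun j hj => ?_
    have hmulsum : cc Q k j * ∑ l ∈ ((Finset.univ.erase k).erase m).erase j,
        cc Q m l * FF f Q P (Equiv.swap k j * Equiv.swap m l)
        = ∑ l ∈ ((Finset.univ.erase k).erase m).erase j,
            cc Q k j * (cc Q m l * FF f Q P (Equiv.swap k j * Equiv.swap m l)) :=
      Finset.mul_sum _ _ _
    linear_combination -hmulsum
  have hT3 : ∑ j ∈ (Finset.univ.erase k).erase m,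
        cc Q m j * (P k * FF f Q P (Equiv.swap m j)
          - (cc Q k j * FF f Q P (Equiv.swap m j * Equiv.swap k m)
             + (cc Q k m * FF f Q P (Equiv.swap m j * Equiv.swap k j)
                + ∑ l ∈ ((Finset.univ.erase k).erase m).erase j,
                    cc Q k l * FF f Q P (Equiv.swap m j * Equiv.swap k l))))
      = P k * ∑ j ∈ (Finset.univ.erase k).erase m, cc Q m j * FF f Q P (Equiv.swap m j)
        - ∑ j ∈ (Finset.univ.erase k).erase m,
            cc Q m j * (cc Q k j * FF f Q P (Equiv.swap m j * Equiv.swap k m))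
        - ∑ j ∈ (Finset.univ.erase k).erase m,
            cc Q m j * (cc Q k m * FF f Q P (Equiv.swap m j * Equiv.swap k j))
        - ∑ j ∈ (Finset.univ.erase k).erase m,
            ∑ l ∈ ((Finset.univ.erase k).erase m).erase j,
              cc Q m j * (cc Q k l * FF f Q P (Equiv.swap m j * Equiv.swap k l)) := by
    rw [Finset.mul_sum, ← Finset.sum_sub_distrib, ← Finset.sum_sub_distrib,
      ← Finset.sum_sub_distrib]
    refine Finset.sum_congr rfl fun j hj => ?_
    have hmulsum : cc Q m j * ∑ l ∈ ((Finset.univ.erase k).erase m).erase j,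
        cc Q k l * FF f Q P (Equiv.swap m j * Equiv.swap k l)
        = ∑ l ∈ ((Finset.univ.erase k).erase m).erase j,
            cc Q m j * (cc Q k l * FF f Q P (Equiv.swap m j * Equiv.swap k l)) :=
      Finset.mul_sum _ _ _
    linear_combination -hmulsum
  -- key single-sum identity
  have hB : ∑ j ∈ (Finset.univ.erase k).erase m,
          cc Q k j * (cc Q m j * FF f Q P (Equiv.swap k j * Equiv.swap m k))
        + ∑ j ∈ (Finset.univ.erase k).erase m,
            cc Q k j * (cc Q m k * FF f Q P (Equiv.swap k j * Equiv.swap m j))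
        + cc Q k m * ∑ l ∈ (Finset.univ.erase k).erase m,
            cc Q k l * FF f Q P (Equiv.swap k m * Equiv.swap m l)
      = ∑ j ∈ (Finset.univ.erase k).erase m,
            cc Q m j * (cc Q k j * FF f Q P (Equiv.swap m j * Equiv.swap k m))
        + ∑ j ∈ (Finset.univ.erase k).erase m,
            cc Q m j * (cc Q k m * FF f Q P (Equiv.swap m j * Equiv.swap k j))
        + cc Q m k * ∑ l ∈ (Finset.univ.erase k).erase m,
            cc Q m l * FF f Q P (Equiv.swap m k * Equiv.swap k l) := by
    rw [Finset.mul_sum, Finset.mul_sum, ← Finset.sum_add_distrib, ← Finset.sum_add_distrib,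
      ← Finset.sum_add_distrib, ← Finset.sum_add_distrib]
    refine Finset.sum_congr rfl fun j hj => ?_
    obtain ⟨hjm, hjk⟩ := by simpa [Finset.mem_erase] using hj
    have hkj : k ≠ j := Ne.symm hjk
    have hmj : m ≠ j := Ne.symm hjm
    rw [swap3_1 hkm hkj hmj, swap3_2 hkm hkj hmj, swap3_3 hkm hkj hmj, swap3_4 hkm hkj hmj]
    have dkj : Q k - Q j ≠ 0 := sub_ne_zero.mpr (hQd k j hkj)
    have dmj : Q m - Q j ≠ 0 := sub_ne_zero.mpr (hQd m j hmj)
    simp only [cc]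
    field_simp
    ring
  -- double-sum identity
  have swap_order : ∀ g : Fin n → Fin n → ℝ,
      ∑ j ∈ (Finset.univ.erase k).erase m, ∑ l ∈ ((Finset.univ.erase k).erase m).erase j, g j l
      = ∑ l ∈ (Finset.univ.erase k).erase m, ∑ j ∈ ((Finset.univ.erase k).erase m).erase l, g j l := by
    intro g
    have h1 : ∀ x : Fin n, ∀ gg : Fin n → ℝ,
        ∑ l ∈ ((Finset.univ.erase k).erase m).erase x, gg l
        = ∑ l ∈ (Finset.univ.erase k).erase m, if l ≠ x then gg l else 0 := by
      intro x gg
      rw [← Finset.filter_ne' _ x, Finset.sum_filter]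
    calc ∑ j ∈ (Finset.univ.erase k).erase m,
            ∑ l ∈ ((Finset.univ.erase k).erase m).erase j, g j l
        = ∑ j ∈ (Finset.univ.erase k).erase m,
            ∑ l ∈ (Finset.univ.erase k).erase m, if l ≠ j then g j l else 0 :=
          Finset.sum_congr rfl fun j _ => h1 j _
      _ = ∑ l ∈ (Finset.univ.erase k).erase m,
            ∑ j ∈ (Finset.univ.erase k).erase m, if l ≠ j then g j l else 0 :=
          Finset.sum_comm
      _ = ∑ l ∈ (Finset.univ.erase k).erase m,
            ∑ j ∈ ((Finset.univ.erase k).erase m).erase l, g j l := by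
          refine Finset.sum_congr rfl fun l _ => ?_
          rw [h1 l (fun j => g j l)]
          refine Finset.sum_congr rfl fun j _ => ?_
          by_cases h : j = l <;> simp [h, Ne.symm, eq_comm]
  have hC : ∑ j ∈ (Finset.univ.erase k).erase m,
        ∑ l ∈ ((Finset.univ.erase k).erase m).erase j,
          cc Q k j * (cc Q m l * FF f Q P (Equiv.swap k j * Equiv.swap m l))
      = ∑ j ∈ (Finset.univ.erase k).erase m,
          ∑ l ∈ ((Finset.univ.erase k).erase m).erase j,
            cc Q m j * (cc Q k l * FF f Q P (Equiv.swap m j * Equiv.swap k l)) := by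
    rw [swap_order fun j l => cc Q m j * (cc Q k l * FF f Q P (Equiv.swap m j * Equiv.swap k l))]
    refine Finset.sum_congr rfl fun j hj => ?_
    obtain ⟨hjm, hjk⟩ := by simpa [Finset.mem_erase] using hj
    refine Finset.sum_congr rfl fun l hl => ?_
    obtain ⟨hlj, hlm, hlk⟩ := by simpa [Finset.mem_erase] using hl
    rw [swap_disj (k := k) (l := j) (m := m) (j := l) (Ne.symm hkm) (Ne.symm hjm) hlk hlj]
    ring
  rw [canon f Q P k m hkm, canon f Q P m k hkm.symm,
    show ((Finset.univ.erase m).erase k : Finset (Fin n)) = (Finset.univ.erase k).erase m from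
      Finset.erase_right_comm,
    hS3, hT3]
  simp only [hc, hF] at hB ⊢
  linear_combination hB + hC
end

section
/- (The first integrals in exchange-operator form.) Let n ≥ 1 and let D = {(Q, P) ∈ ℝⁿ × ℝⁿ : Q_i ≠ Q_j for all i ≠ j}. For k ≠ j let s_{kj} : D → D swap the k-th and j-th coordinates of both Q and P, and for f : D → ℝ define (P̂_k f)(Q, P) = P_k · f(Q, P) − Σ_{j≠k} (2/(Q_k − Q_j)) · f(s_{kj}(Q, P)). Let 𝟙 denote the constant function 1 on D. Then for every k and every (Q, P) ∈ D: (P̂_k(P̂_k 𝟙))(Q, P) / 2 = P_k²/2 − Σ_{j≠k} (P_k + P_j)/(Q_k − Q_j) − Σ_{j≠k} 2/(Q_k − Q_j)² + Σ_{j≠k} Σ_{l≠k,j} 2/((Q_k − Q_j)·(Q_j − Q_l)). Consequently, with P_k = κ·Q_k'(t), the first integrals (3.30) read (P̂_k² 𝟙)/2 + t·Q_k² − Q_k⁴/2 − (κ−2)·Q_k + U = 0. -/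
open scoped BigOperators

/-- explicit evaluation of `P̂_k² 𝟙 / 2` on the domain where the
`Q`-coordinates are pairwise distinct, and, consequently, the first integrals (3.30)
take the exchange-operator form `P̂_k² 𝟙 / 2 + t Q_k² - Q_k⁴/2 - (κ - 2) Q_k + U = 0`. -/
theorem first_integrals_exchange_operator_form
    (n : ℕ) (hn : 1 ≤ n) (k : Fin n)
    (Q P : Fin n → ℝ)
    (hQd : ∀ i j : Fin n, i ≠ j → Q i ≠ Q j) :
    (momOp k (momOp k (fun _ => (1 : ℝ))) (Q, P) / 2
      = (P k) ^ 2 / 2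
        - (∑ j ∈ Finset.univ.erase k, (P k + P j) / (Q k - Q j))
        - (∑ j ∈ Finset.univ.erase k, 2 / (Q k - Q j) ^ 2)
        + (∑ j ∈ Finset.univ.erase k, ∑ l ∈ (Finset.univ.erase k).erase j,
            2 / ((Q k - Q j) * (Q j - Q l))))
    ∧
    (∀ t U : ℝ,
      ((P k) ^ 2 / 2 + t * (Q k) ^ 2 - (Q k) ^ 4 / 2 - ((n : ℝ) - 2) * Q k
          - (∑ j ∈ Finset.univ.erase k, 2 / (Q k - Q j) ^ 2)
          + U
          - (∑ j ∈ Finset.univ.erase k, (P k + P j) / (Q k - Q j))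
          + (∑ j ∈ Finset.univ.erase k, ∑ l ∈ (Finset.univ.erase k).erase j,
              2 / ((Q k - Q j) * (Q j - Q l))) = 0)
        ↔
      (momOp k (momOp k (fun _ => (1 : ℝ))) (Q, P) / 2
          + t * (Q k) ^ 2 - (Q k) ^ 4 / 2 - ((n : ℝ) - 2) * Q k + U = 0)) := by
  have key : momOp k (momOp k (fun _ => (1 : ℝ))) (Q, P) / 2
      = (P k) ^ 2 / 2
        - (∑ j ∈ Finset.univ.erase k, (P k + P j) / (Q k - Q j))
        - (∑ j ∈ Finset.univ.erase k, 2 / (Q k - Q j) ^ 2)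
        + (∑ j ∈ Finset.univ.erase k, ∑ l ∈ (Finset.univ.erase k).erase j,
            2 / ((Q k - Q j) * (Q j - Q l))) := by
    simp only [momOp, swapQP, Function.comp, mul_one, Equiv.swap_apply_left]
    have h1 : ∀ x ∈ Finset.univ.erase k,
        (∑ l ∈ Finset.univ.erase k, 2 / (Q x - Q ((Equiv.swap k x) l)))
          = 2 / (Q x - Q k) + ∑ l ∈ (Finset.univ.erase k).erase x, 2 / (Q x - Q l) := by
      intro x hx
      rw [← Finset.add_sum_erase _ _ hx, Equiv.swap_apply_right]
      congr 1
      refine Finset.sum_congr rfl fun l hl => ?_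
      have hl1 := (Finset.mem_erase.1 hl).1
      have hl2 := (Finset.mem_erase.1 (Finset.mem_erase.1 hl).2).1
      rw [Equiv.swap_apply_of_ne_of_ne hl2 hl1]
    have h1' : ∑ x ∈ Finset.univ.erase k,
        2 / (Q k - Q x) * (P x - ∑ l ∈ Finset.univ.erase k, 2 / (Q x - Q ((Equiv.swap k x) l)))
      = ∑ x ∈ Finset.univ.erase k,
        2 / (Q k - Q x) * (P x - (2 / (Q x - Q k) + ∑ l ∈ (Finset.univ.erase k).erase x, 2 / (Q x - Q l))) :=
      Finset.sum_congr rfl fun x hx => by rw [h1 x hx]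
    have hd : ∀ x ∈ Finset.univ.erase k, Q k - Q x ≠ 0 := fun x hx =>
      sub_ne_zero.2 (hQd k x (Ne.symm (Finset.mem_erase.1 hx).1))
    have main : ∑ x ∈ Finset.univ.erase k,
        (P k * (2 / (Q k - Q x)) + 2 / (Q k - Q x) *
          (P x - (2 / (Q x - Q k) + ∑ l ∈ (Finset.univ.erase k).erase x, 2 / (Q x - Q l))))
      = ∑ x ∈ Finset.univ.erase k,
        (2 * ((P k + P x) / (Q k - Q x)) + 2 * (2 / (Q k - Q x) ^ 2)
          - ∑ l ∈ (Finset.univ.erase k).erase x, 2 * (2 / ((Q k - Q x) * (Q x - Q l)))) := by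
      refine Finset.sum_congr rfl fun x hx => ?_
      have hdx := hd x hx
      have hsum : 2 / (Q k - Q x) * ∑ l ∈ (Finset.univ.erase k).erase x, 2 / (Q x - Q l)
          = ∑ l ∈ (Finset.univ.erase k).erase x, 2 * (2 / ((Q k - Q x) * (Q x - Q l))) := by
        rw [Finset.mul_sum]
        refine Finset.sum_congr rfl fun l _ => ?_
        rw [div_mul_div_comm]; ring_nf
      have hdx' : Q x - Q k ≠ 0 := sub_ne_zero.2 (hQd x k (Finset.mem_erase.1 hx).1)
      have h2 : 2 / (Q k - Q x) * (2 / (Q x - Q k)) = -(2 * (2 / (Q k - Q x) ^ 2)) := by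
        field_simp
        ring
      have h3 : P k * (2 / (Q k - Q x)) + 2 / (Q k - Q x) * P x
          = 2 * ((P k + P x) / (Q k - Q x)) := by ring
      rw [mul_sub, mul_add, hsum]
      linarith [h2, h3]
    rw [h1', mul_sub, Finset.mul_sum, sub_sub, ← Finset.sum_add_distrib, main,
      Finset.sum_sub_distrib, Finset.sum_add_distrib]
    simp only [← Finset.mul_sum]
    ring
  refine ⟨key, fun t U => ?_⟩
  rw [key]
  constructor <;> intro h <;> linarith
end
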